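/- arXiv:2209.15116 — 2 statements merged into one kernel-verified Lean document; each statement's English description precedes it below -/
import Mathlib

section
/- Let S be a sub-semifield of 𝕋 (with S ≠ 𝔹) and let A be a topological S-algebra with structure map ι : S → A. Let P ∈ Cont A be maximal with respect to inclusion among the elements of Cont A (inclusion of congruences as subsets of A × A). Then there exists a unique semiring homomorphism w : A → 𝕋 such that the congruence kernel {(f,g) : w(f) = w(g)} of w equals P and w ∘ ι : S → 𝕋 is the inclusion of S into 𝕋. -/
/-- A totally ordered idempotent semifield, assumed different from the Boolean semifield `𝔹`. -/
class IdemTOSemifield (K : Type*) extends CommSemiring K, LinearOrder K where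
  add_eq_max : ∀ a b : K, a + b = max a b
  exists_inv : ∀ a : K, a ≠ 0 → ∃ b : K, a * b = 1
  exists_nontrivial_unit : ∃ a : K, a ≠ 0 ∧ a ≠ 1

/-- The canonical topology on a totally ordered semifield. -/
def canonicalTopology (K : Type*) [IdemTOSemifield K] : TopologicalSpace K :=
  TopologicalSpace.generateFrom
    {s : Set K | (∃ a : K, a ≠ 0 ∧ s = {a}) ∨ (∃ a : K, a ≠ 0 ∧ s = Set.Iic a)}

private theorem nnreal_mul_max (a b c : NNReal) : a * max b c = max (a * b) (a * c) := by
  rcases le_total b c with h | h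
  · rw [max_eq_right h, max_eq_right (mul_le_mul_of_nonneg_left h (zero_le : (0 : NNReal) ≤ a))]
  · rw [max_eq_left h, max_eq_left (mul_le_mul_of_nonneg_left h (zero_le : (0 : NNReal) ≤ a))]

private theorem nnreal_max_mul (a b c : NNReal) : max a b * c = max (a * c) (b * c) := by
  rcases le_total a b with h | h
  · rw [max_eq_right h, max_eq_right (mul_le_mul_of_nonneg_right h (zero_le : (0 : NNReal) ≤ c))]
  · rw [max_eq_left h, max_eq_left (mul_le_mul_of_nonneg_right h (zero_le : (0 : NNReal) ≤ c))]

/-- The tropical semifield `𝕋`, modelled as `[0, ∞)` with addition `max` and the usual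
multiplication. -/
def Trop : Type := NNReal

namespace Trop

/-- Regard a nonnegative real as an element of `Trop`. -/
def mk (x : NNReal) : Trop := x

/-- The underlying nonnegative real of an element of `Trop`. -/
def toNNReal (x : Trop) : NNReal := x

noncomputable instance instLinearOrder : LinearOrder Trop :=
  inferInstanceAs (LinearOrder NNReal)

noncomputable instance instAdd : Add Trop := ⟨fun a b => max a b⟩
instance instZero : Zero Trop := inferInstanceAs (Zero NNReal)
instance instMul : Mul Trop := inferInstanceAs (Mul NNReal)
instance instOne : One Trop := inferInstanceAs (One NNReal)

noncomputable instance instCommSemiring : CommSemiring Trop where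
  __ := (inferInstance : CommMonoidWithZero NNReal)
  add a b := a + b
  nsmul := nsmulRec
  add_assoc a b c := max_assoc a b c
  zero_add a := max_eq_right (zero_le : (0 : NNReal) ≤ toNNReal a)
  add_zero a := max_eq_left (zero_le : (0 : NNReal) ≤ toNNReal a)
  add_comm a b := max_comm a b
  left_distrib a b c := by exact nnreal_mul_max a b c
  right_distrib a b c := by exact nnreal_max_mul a b c

noncomputable instance instIdemTOSemifield : IdemTOSemifield Trop where
  add_eq_max a b := rfl
  exists_inv a ha :=
    ⟨mk (toNNReal a)⁻¹, by exact mul_inv_cancel₀ (a := toNNReal a) (fun h => ha h)⟩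
  exists_nontrivial_unit :=
    ⟨mk 2, fun h => two_ne_zero (show (2 : NNReal) = 0 from h),
      fun h => by
        have : (2 : NNReal) = 1 := h
        norm_num at this⟩

end Trop

/-- `S` is (isomorphic to) a sub-semifield of the tropical semifield `𝕋` (and `S ≠ 𝔹`). -/
class TropSub (S : Type*) extends IdemTOSemifield S where
  emb : S →+* Trop
  emb_injective : Function.Injective emb

namespace ITOS

variable {K : Type*} [IdemTOSemifield K]

theorem le_iff_add {a b : K} : a ≤ b ↔ a + b = b := by
  rw [IdemTOSemifield.add_eq_max, max_eq_right_iff]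

theorem zero_le' (a : K) : (0 : K) ≤ a := by
  rw [le_iff_add, zero_add]

theorem le_zero_iff' {a : K} : a ≤ 0 ↔ a = 0 :=
  ⟨fun h => le_antisymm h (zero_le' a), fun h => h ▸ le_refl _⟩

theorem zero_lt_iff' {a : K} : 0 < a ↔ a ≠ 0 :=
  ⟨fun h => (ne_of_gt h), fun h => lt_of_le_of_ne (zero_le' a) (Ne.symm h)⟩

theorem zero_ne_one' : (0 : K) ≠ 1 := by
  obtain ⟨a, ha0, _⟩ := IdemTOSemifield.exists_nontrivial_unit (K := K)
  intro h
  exact ha0 (by rw [← mul_one a, ← h, mul_zero])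

theorem mul_le_mul_l {a b : K} (h : a ≤ b) (c : K) : a * c ≤ b * c := by
  rw [le_iff_add] at h ⊢
  rw [← add_mul, h]

theorem mul_cancel' {a b c : K} (hc : c ≠ 0) (h : a * c = b * c) : a = b := by
  obtain ⟨d, hd⟩ := IdemTOSemifield.exists_inv c hc
  calc a = a * (c * d) := by rw [hd, mul_one]
    _ = (a * c) * d := by ring
    _ = (b * c) * d := by rw [h]
    _ = b * (c * d) := by ring
    _ = b := by rw [hd, mul_one]

theorem mul_ne_zero' {a b : K} (ha : a ≠ 0) (hb : b ≠ 0) : a * b ≠ 0 := by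
  intro h
  apply hb
  obtain ⟨d, hd⟩ := IdemTOSemifield.exists_inv a ha
  calc b = (a * d) * b := by rw [hd, one_mul]
    _ = (a * b) * d := by ring
    _ = 0 := by rw [h, zero_mul]

theorem mul_lt_mul_r {a b c : K} (h : a < b) (hc : c ≠ 0) : a * c < b * c :=
  lt_of_le_of_ne (mul_le_mul_l h.le c) (fun he => absurd (mul_cancel' hc he) (ne_of_lt h))

theorem mul_le_mul'' {a b c d : K} (h : a ≤ b) (h' : c ≤ d) : a * c ≤ b * d :=
  le_trans (mul_le_mul_l h c) (by rw [mul_comm b c, mul_comm b d]; exact mul_le_mul_l h' b)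

theorem pow_le_pow' {a b : K} (h : a ≤ b) (n : ℕ) : a ^ n ≤ b ^ n := by
  induction n with
  | zero => simp
  | succ n ih => rw [pow_succ, pow_succ]; exact mul_le_mul'' ih h

theorem pow_ne_zero'' {a : K} (h : a ≠ 0) (n : ℕ) : a ^ n ≠ 0 := by
  induction n with
  | zero => simpa using (zero_ne_one').symm
  | succ n ih => rw [pow_succ]; exact mul_ne_zero' ih h

theorem pow_lt_pow' {a b : K} (h : a < b) (ha : a ≠ 0) {n : ℕ} (hn : 0 < n) :
    a ^ n < b ^ n := by
  induction n with
  | zero => omega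
  | succ n ih =>
    rcases Nat.eq_zero_or_pos n with h0 | h0
    · simpa [h0] using h
    · rw [pow_succ, pow_succ]
      calc a ^ n * a < b ^ n * a := mul_lt_mul_r (ih h0) ha
        _ ≤ b ^ n * b := by rw [mul_comm, mul_comm (b^n) b]; exact mul_le_mul_l h.le _
 
theorem le_of_pow_le_pow {a b : K} {n : ℕ} (hn : 0 < n) (h : a ^ n ≤ b ^ n) : a ≤ b := by
  by_contra hab
  push_neg at hab
  rcases eq_or_ne b 0 with rfl | hb
  · rw [zero_pow (Nat.pos_iff_ne_zero.mp hn)] at h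
    exact (pow_ne_zero'' (zero_lt_iff'.mp (lt_of_le_of_lt (zero_le' _) hab)) n)
      (le_zero_iff'.mp h)
  · exact absurd h (not_le.mpr (pow_lt_pow' hab hb hn))

theorem max_mul' (a b c : K) : max a b * c = max (a * c) (b * c) := by
  rw [← IdemTOSemifield.add_eq_max, ← IdemTOSemifield.add_eq_max, add_mul]

/-- ring homs between idempotent totally ordered semifields preserve max. -/
theorem hom_map_max {L : Type*} [IdemTOSemifield L] (φ : K →+* L) (a b : K) :
    φ (max a b) = max (φ a) (φ b) := by
  rw [← IdemTOSemifield.add_eq_max, ← IdemTOSemifield.add_eq_max, map_add]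

theorem hom_monotone {L : Type*} [IdemTOSemifield L] (φ : K →+* L) : Monotone φ := by
  intro a b h
  have h2 := hom_map_max φ a b
  rw [max_eq_right h] at h2
  calc φ a ≤ max (φ a) (φ b) := le_max_left _ _
    _ = φ b := h2.symm

theorem hom_le_iff {L : Type*} [IdemTOSemifield L] (φ : K →+* L)
    (hinj : Function.Injective φ) {a b : K} : φ a ≤ φ b ↔ a ≤ b := by
  constructor
  · intro h
    by_contra hab
    push_neg at hab
    exact absurd (le_antisymm h (hom_monotone φ hab.le)) (fun he => (ne_of_lt hab).symm (hinj he))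
  · exact fun h => hom_monotone φ h

theorem hom_lt_iff {L : Type*} [IdemTOSemifield L] (φ : K →+* L)
    (hinj : Function.Injective φ) {a b : K} : φ a < φ b ↔ a < b := by
  rw [lt_iff_le_and_ne, lt_iff_le_and_ne, hom_le_iff φ hinj, hinj.ne_iff]

/-- Any set of nonzero elements, possibly together with a down-set, is open. -/
theorem isOpen_of_zero_imp {s : Set K} (h : (0 : K) ∈ s → ∃ b : K, b ≠ 0 ∧ Set.Iic b ⊆ s) :
    @IsOpen K (canonicalTopology K) s := by
  letI := canonicalTopology K
  have hsing : ∀ t : Set K, (0 : K) ∉ t → IsOpen t := by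
    intro t ht
    have : t = ⋃ x ∈ t, {x} := by simp
    rw [this]
    refine isOpen_biUnion fun x hx => ?_
    exact TopologicalSpace.isOpen_generateFrom_of_mem (Or.inl ⟨x, fun h0 => ht (h0 ▸ hx), rfl⟩)
  by_cases h0 : (0 : K) ∈ s
  · obtain ⟨b, hb, hbs⟩ := h h0
    have : s = Set.Iic b ∪ (s \ {0}) := by
      apply Set.Subset.antisymm
      · intro x hx
        by_cases hx0 : x = 0
        · exact Or.inl (hx0 ▸ zero_le' b)
        · exact Or.inr ⟨hx, hx0⟩
      · rintro x (hx | hx)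
        · exact hbs hx
        · exact hx.1
    rw [this]
    exact IsOpen.union
      (TopologicalSpace.isOpen_generateFrom_of_mem (Or.inr ⟨b, hb, rfl⟩))
      (hsing _ (fun hc => hc.2 rfl))
  · exact hsing s h0

/-- Open sets containing 0 contain a down-set. -/
theorem exists_Iic_subset_of_isOpen {s : Set K} (hs : @IsOpen K (canonicalTopology K) s)
    (h0 : (0 : K) ∈ s) : ∃ b : K, b ≠ 0 ∧ Set.Iic b ⊆ s := by
  induction hs with
  | basic t ht =>
    rcases ht with ⟨a, ha, rfl⟩ | ⟨a, ha, rfl⟩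
    · exact absurd h0.symm ha
    · exact ⟨a, ha, le_refl _⟩
  | univ =>
    obtain ⟨a, ha, -⟩ := IdemTOSemifield.exists_nontrivial_unit (K := K)
    exact ⟨a, ha, Set.subset_univ _⟩
  | inter t u _ _ iht ihu =>
    obtain ⟨b, hb, hbs⟩ := iht h0.1
    obtain ⟨c, hc, hcs⟩ := ihu h0.2
    refine ⟨min b c, ?_, fun x hx => ⟨hbs (le_trans hx (min_le_left _ _)),
      hcs (le_trans hx (min_le_right _ _))⟩⟩
    rcases min_choice b c with h | h <;> rw [h] <;> assumption
  | sUnion S _ ih =>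
    obtain ⟨t, htS, h0t⟩ := h0
    obtain ⟨b, hb, hbs⟩ := ih t htS h0t
    exact ⟨b, hb, fun x hx => ⟨t, htS, hbs hx⟩⟩

end ITOS



namespace ITOS

variable {K : Type u_1} [IdemTOSemifield K]

theorem exists_lt_one : ∃ a : K, a ≠ 0 ∧ a < 1 := by
  obtain ⟨x, hx0, hx1⟩ := IdemTOSemifield.exists_nontrivial_unit (K := K)
  rcases lt_trichotomy x 1 with h | h | h
  · exact ⟨x, hx0, h⟩
  · exact absurd h hx1
  · obtain ⟨y, hy⟩ := IdemTOSemifield.exists_inv x hx0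
    have hy0 : y ≠ 0 := fun h0 => zero_ne_one' (by rw [← hy, h0, mul_zero])
    refine ⟨y, hy0, ?_⟩
    by_contra hy1
    push_neg at hy1
    have : x * 1 ≤ x * y := by rw [mul_comm x y, mul_comm x 1]; exact mul_le_mul_l hy1 x
    rw [mul_one, hy] at this
    exact absurd h (not_lt.mpr this)

theorem exists_one_lt : ∃ a : K, 1 < a := by
  obtain ⟨x, hx0, hx1⟩ := exists_lt_one (K := K)
  obtain ⟨y, hy⟩ := IdemTOSemifield.exists_inv x hx0
  refine ⟨y, ?_⟩
  by_contra hy1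
  push_neg at hy1
  have : x * y ≤ x * 1 := by rw [mul_comm x y, mul_comm x 1]; exact mul_le_mul_l hy1 x
  rw [mul_one, hy] at this
  exact absurd (lt_of_le_of_lt this hx1) (by simp [zero_ne_one' (K := K)] )

theorem trop_small {S : Type u_2} [TropSub S] {r b : S} (hr1 : r < 1) (hr0 : r ≠ 0)
    (hb : b ≠ 0) : ∃ n : ℕ, r ^ n ≤ b := by
  have hinj := TropSub.emb_injective (S := S)
  set E : S →+* Trop := TropSub.emb with hE
  have hlt : E r < E 1 := (hom_lt_iff E hinj).mpr hr1
  rw [map_one] at hlt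
  have hb' : E b ≠ 0 := fun h => hb (hinj (by rw [h, map_zero]))
  have hbR : (0 : ℝ) < ((Trop.toNNReal (E b)) : ℝ) := by
    have : Trop.toNNReal (E b) ≠ 0 := hb'
    positivity
  have hrR : ((Trop.toNNReal (E r)) : ℝ) < 1 := by
    exact_mod_cast (show Trop.toNNReal (E r) < 1 from hlt)
  obtain ⟨n, hn⟩ := exists_pow_lt_of_lt_one hbR hrR
  refine ⟨n, ?_⟩
  have : E (r ^ n) < E b := by
    rw [map_pow]
    show ((Trop.toNNReal (E r)) ^ n : NNReal) < Trop.toNNReal (E b)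
    rw [← NNReal.coe_lt_coe]
    push_cast
    exact hn
  exact ((hom_lt_iff E hinj).mp this).le

theorem inj_of_continuous {S : Type u_2} [TropSub S] (u : S →+* K)
    (hu : @Continuous S K (canonicalTopology S) (canonicalTopology K) u) :
    Function.Injective u := by
  letI : TopologicalSpace S := canonicalTopology S
  letI : TopologicalSpace K := canonicalTopology K
  have hker : ∀ s : S, u s = 0 → s = 0 := by
    intro s hs
    by_contra hs0
    obtain ⟨d, hd⟩ := IdemTOSemifield.exists_inv s hs0
    have : (1 : K) = 0 := by rw [← map_one u, ← hd, map_mul, hs, zero_mul]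
    exact zero_ne_one' this.symm
  -- key step: no nontrivial element maps to 1
  have hone : ∀ r : S, r ≠ 0 → r < 1 → u r ≠ 1 := by
    intro r hr0 hr1 hur
    obtain ⟨a, ha0, ha1⟩ := exists_lt_one (K := K)
    have hIic : @IsOpen K (canonicalTopology K) (Set.Iic a) :=
      TopologicalSpace.isOpen_generateFrom_of_mem (Or.inr ⟨a, ha0, rfl⟩)
    have hU : @IsOpen S (canonicalTopology S) (u ⁻¹' Set.Iic a) := hIic.preimage hu
    have h0U : (0 : S) ∈ u ⁻¹' Set.Iic a := by
      simp only [Set.mem_preimage, map_zero]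
      exact Set.mem_Iic.mpr (zero_le' a)
    obtain ⟨b, hb0, hbs⟩ := exists_Iic_subset_of_isOpen hU h0U
    obtain ⟨n, hn⟩ := trop_small hr1 hr0 hb0
    have := hbs (Set.mem_Iic.mpr hn)
    simp only [Set.mem_preimage, map_pow, hur, one_pow, Set.mem_Iic] at this
    exact absurd (lt_of_le_of_lt this ha1) (lt_irrefl 1)
  intro s t hst
  by_contra hne
  -- wlog s < t
  wlog hlt : s < t generalizing s t
  · exact this hst.symm (Ne.symm hne) (lt_of_le_of_ne (not_lt.mp hlt) (Ne.symm hne))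
  have ht0 : t ≠ 0 := fun h => absurd (h ▸ hlt) (not_lt.mpr (zero_le' s))
  have hs0 : s ≠ 0 := fun h => ht0 (hker t (by rw [← hst, h, map_zero]))
  obtain ⟨d, hd⟩ := IdemTOSemifield.exists_inv t ht0
  have hd0 : d ≠ 0 := fun h0 => zero_ne_one' (by rw [← hd, h0, mul_zero])
  set r := s * d with hr
  have hr0 : r ≠ 0 := mul_ne_zero' hs0 hd0
  have hr1 : r < 1 := by
    have := mul_lt_mul_r hlt hd0
    rwa [hd] at this
  exact hone r hr0 hr1 (by rw [hr, map_mul, hst, ← map_mul, hd, map_one])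

end ITOS



namespace KQuot

open ITOS

/-- Data for the quotient of `K` by the convex subgroup generated by `b/a`. -/
structure Pack (K : Type u_3) [IdemTOSemifield K] where
  a : K
  b : K
  ha : a ≠ 0
  hab : a < b
  c : K
  hc : c ≠ 0
  hc1 : ¬ ∃ n : ℕ, c * a ^ n ≤ b ^ n ∧ a ^ n ≤ c * b ^ n

variable {K : Type u_3} [IdemTOSemifield K] (p : Pack K)

theorem hb : p.b ≠ 0 :=
  zero_lt_iff'.mp (lt_of_le_of_lt (zero_le' p.a) p.hab)

/-- the congruence relation -/
def rel (k l : K) : Prop :=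
  (k = 0 ∧ l = 0) ∨ (k ≠ 0 ∧ l ≠ 0 ∧ ∃ n : ℕ, k * p.a ^ n ≤ l * p.b ^ n ∧ l * p.a ^ n ≤ k * p.b ^ n)

/-- the quotient order -/
def le0 (k l : K) : Prop :=
  k = 0 ∨ (k ≠ 0 ∧ l ≠ 0 ∧ ∃ n : ℕ, k * p.a ^ n ≤ l * p.b ^ n)

theorem mono_n {k l : K} {n m : ℕ} (h : k * p.a ^ n ≤ l * p.b ^ n) (hnm : n ≤ m) :
    k * p.a ^ m ≤ l * p.b ^ m := by
  obtain ⟨j, rfl⟩ := Nat.exists_eq_add_of_le hnm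
  calc k * p.a ^ (n + j) = (k * p.a ^ n) * p.a ^ j := by ring
    _ ≤ (l * p.b ^ n) * p.b ^ j := mul_le_mul'' h (pow_le_pow' p.hab.le j)
    _ = l * p.b ^ (n + j) := by ring

theorem le0_refl (k : K) : le0 p k k := by
  rcases eq_or_ne k 0 with h | h
  · exact Or.inl h
  · exact Or.inr ⟨h, h, 0, by simp⟩

theorem le0_trans {k l m : K} (h1 : le0 p k l) (h2 : le0 p l m) : le0 p k m := by
  rcases h1 with h1 | ⟨hk, hl, n1, h1⟩
  · exact Or.inl h1
  rcases h2 with h2 | ⟨hl', hm, n2, h2⟩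
  · exact absurd h2 hl
  refine Or.inr ⟨hk, hm, n1 + n2, ?_⟩
  calc k * p.a ^ (n1 + n2) = (k * p.a ^ n1) * p.a ^ n2 := by ring
    _ ≤ (l * p.b ^ n1) * p.a ^ n2 := mul_le_mul_l h1 _
    _ = (l * p.a ^ n2) * p.b ^ n1 := by ring
    _ ≤ (m * p.b ^ n2) * p.b ^ n1 := mul_le_mul_l h2 _
    _ = m * p.b ^ (n1 + n2) := by ring

theorem le0_of_le {k l : K} (h : k ≤ l) : le0 p k l := by
  rcases eq_or_ne k 0 with hk | hk
  · exact Or.inl hk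
  · have hl : l ≠ 0 := fun h0 => hk (le_zero_iff'.mp (h0 ▸ h))
    exact Or.inr ⟨hk, hl, 0, by simpa using h⟩

theorem rel_iff_le0 {k l : K} : rel p k l ↔ le0 p k l ∧ le0 p l k := by
  constructor
  · rintro (⟨hk, hl⟩ | ⟨hk, hl, n, h1, h2⟩)
    · exact ⟨Or.inl hk, Or.inl hl⟩
    · exact ⟨Or.inr ⟨hk, hl, n, h1⟩, Or.inr ⟨hl, hk, n, h2⟩⟩
  · rintro ⟨h1 | ⟨hk, hl, n1, h1⟩, h2 | ⟨hl', hk', n2, h2⟩⟩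
    · exact Or.inl ⟨h1, h2⟩
    · exact absurd h1 hk'
    · exact absurd h2 hl
    · exact Or.inr ⟨hk, hl, n1 + n2,
        mono_n p h1 (Nat.le_add_right _ _), mono_n p h2 (Nat.le_add_left _ _)⟩

theorem rel_refl (k : K) : rel p k k := (rel_iff_le0 p).mpr ⟨le0_refl p k, le0_refl p k⟩

theorem rel_symm {k l : K} (h : rel p k l) : rel p l k := by
  rw [rel_iff_le0] at h ⊢; exact ⟨h.2, h.1⟩

theorem rel_trans {k l m : K} (h1 : rel p k l) (h2 : rel p l m) : rel p k m := by
  rw [rel_iff_le0] at h1 h2 ⊢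
  exact ⟨le0_trans p h1.1 h2.1, le0_trans p h2.2 h1.2⟩

theorem le0_congr {k k' l l' : K} (hk : rel p k k') (hl : rel p l l') (h : le0 p k l) :
    le0 p k' l' := by
  rw [rel_iff_le0] at hk hl
  exact le0_trans p hk.2 (le0_trans p h hl.1)

theorem le0_total (k l : K) : le0 p k l ∨ le0 p l k := by
  rcases le_total k l with h | h
  · exact Or.inl (le0_of_le p h)
  · exact Or.inr (le0_of_le p h)

def kqSetoid : Setoid K := ⟨rel p, rel_refl p, fun h => rel_symm p h, fun h h' => rel_trans p h h'⟩

def KQ : Type u_3 := Quotient (kqSetoid p)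

def qmk (k : K) : KQ p := Quotient.mk (kqSetoid p) k

theorem qmk_eq_iff {k l : K} : qmk p k = qmk p l ↔ rel p k l :=
  ⟨fun h => Quotient.exact h, fun h => Quotient.sound h⟩

theorem rel_mul {k k' l l' : K} (hk : rel p k k') (hl : rel p l l') : rel p (k * l) (k' * l') := by
  rcases hk with ⟨hk1, hk2⟩ | ⟨hk1, hk2, n1, hk3, hk4⟩
  · exact Or.inl ⟨by rw [hk1, zero_mul], by rw [hk2, zero_mul]⟩
  rcases hl with ⟨hl1, hl2⟩ | ⟨hl1, hl2, n2, hl3, hl4⟩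
  · exact Or.inl ⟨by rw [hl1, mul_zero], by rw [hl2, mul_zero]⟩
  refine Or.inr ⟨mul_ne_zero' hk1 hl1, mul_ne_zero' hk2 hl2, n1 + n2, ?_, ?_⟩
  · calc k * l * p.a ^ (n1 + n2) = (k * p.a ^ n1) * (l * p.a ^ n2) := by ring
      _ ≤ (k' * p.b ^ n1) * (l' * p.b ^ n2) := mul_le_mul'' hk3 hl3
      _ = k' * l' * p.b ^ (n1 + n2) := by ring
  · calc k' * l' * p.a ^ (n1 + n2) = (k' * p.a ^ n1) * (l' * p.a ^ n2) := by ring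
      _ ≤ (k * p.b ^ n1) * (l * p.b ^ n2) := mul_le_mul'' hk4 hl4
      _ = k * l * p.b ^ (n1 + n2) := by ring

theorem le0_max {k k' l l' : K} (hk : le0 p k k') (hl : le0 p l l') :
    le0 p (max k l) (max k' l') := by
  rcases hk with hk | ⟨hk1, hk2, n1, hk3⟩
  · subst hk
    rw [max_eq_right (zero_le' l)]
    exact le0_trans p hl (le0_of_le p (le_max_right k' l'))
  rcases hl with hl | ⟨hl1, hl2, n2, hl3⟩
  · subst hl
    rw [max_eq_left (zero_le' k)]
    exact le0_trans p (Or.inr ⟨hk1, hk2, n1, hk3⟩) (le0_of_le p (le_max_left k' l'))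
  have hmax : max k l ≠ 0 := fun h => hk1 (le_zero_iff'.mp (h ▸ le_max_left k l))
  have hmax' : max k' l' ≠ 0 := fun h => hk2 (le_zero_iff'.mp (h ▸ le_max_left k' l'))
  refine Or.inr ⟨hmax, hmax', n1 + n2, ?_⟩
  rw [max_mul']
  refine max_le ?_ ?_
  · exact le_trans (mono_n p hk3 (Nat.le_add_right _ _))
      (mul_le_mul_l (le_max_left k' l') _)
  · exact le_trans (mono_n p hl3 (Nat.le_add_left _ _))
      (mul_le_mul_l (le_max_right k' l') _)

theorem rel_add {k k' l l' : K} (hk : rel p k k') (hl : rel p l l') :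
    rel p (k + l) (k' + l') := by
  rw [IdemTOSemifield.add_eq_max, IdemTOSemifield.add_eq_max, rel_iff_le0]
  rw [rel_iff_le0] at hk hl
  exact ⟨le0_max p hk.1 hl.1, le0_max p hk.2 hl.2⟩

instance : Zero (KQ p) := ⟨qmk p 0⟩
instance : One (KQ p) := ⟨qmk p 1⟩

instance : Add (KQ p) :=
  ⟨Quotient.map₂ (· + ·) (fun _ _ h _ _ h' => rel_add p h h')⟩

instance : Mul (KQ p) :=
  ⟨Quotient.map₂ (· * ·) (fun _ _ h _ _ h' => rel_mul p h h')⟩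

theorem qmk_add (k l : K) : qmk p k + qmk p l = qmk p (k + l) := rfl
theorem qmk_mul (k l : K) : qmk p k * qmk p l = qmk p (k * l) := rfl
theorem qmk_zero : (0 : KQ p) = qmk p 0 := rfl
theorem qmk_one : (1 : KQ p) = qmk p 1 := rfl

theorem qmk_eq_zero_iff {k : K} : qmk p k = 0 ↔ k = 0 := by
  rw [qmk_zero, qmk_eq_iff]
  constructor
  · rintro (⟨h, -⟩ | ⟨-, h, -⟩)
    · exact h
    · exact absurd rfl h
  · intro h; exact Or.inl ⟨h, rfl⟩

instance : LE (KQ p) :=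
  ⟨Quotient.lift₂ (le0 p) (fun k l k' l' hk hl => propext
    ⟨fun h => le0_congr p hk hl h, fun h => le0_congr p (rel_symm p hk) (rel_symm p hl) h⟩)⟩

theorem qmk_le_iff {k l : K} : qmk p k ≤ qmk p l ↔ le0 p k l := Iff.rfl

noncomputable instance : LinearOrder (KQ p) where
  le := (· ≤ ·)
  le_refl x := Quotient.inductionOn x (fun k => le0_refl p k)
  le_trans x y z := Quotient.inductionOn₃ x y z (fun k l m h1 h2 => le0_trans p h1 h2)
  le_antisymm x y := Quotient.inductionOn₂ x y
    (fun k l h1 h2 => Quotient.sound ((rel_iff_le0 p).mpr ⟨h1, h2⟩))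
  le_total x y := Quotient.inductionOn₂ x y (fun k l => le0_total p k l)
  toDecidableLE := fun _ _ => Classical.propDecidable _

theorem qmk_mono {k l : K} (h : k ≤ l) : qmk p k ≤ qmk p l := le0_of_le p h

theorem qmk_max (k l : K) : qmk p (max k l) = max (qmk p k) (qmk p l) := by
  rcases le_total k l with h | h
  · rw [max_eq_right h, max_eq_right (qmk_mono p h)]
  · rw [max_eq_left h, max_eq_left (qmk_mono p h)]

noncomputable instance : CommSemiring (KQ p) where
  add := (· + ·)
  add_assoc x y z := Quotient.inductionOn₃ x y z
    (fun k l m => congrArg (qmk p) (add_assoc k l m))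
  zero := 0
  zero_add x := Quotient.inductionOn x (fun k => congrArg (qmk p) (zero_add k))
  add_zero x := Quotient.inductionOn x (fun k => congrArg (qmk p) (add_zero k))
  add_comm x y := Quotient.inductionOn₂ x y (fun k l => congrArg (qmk p) (add_comm k l))
  nsmul := nsmulRec
  mul := (· * ·)
  mul_assoc x y z := Quotient.inductionOn₃ x y z
    (fun k l m => congrArg (qmk p) (mul_assoc k l m))
  one := 1
  one_mul x := Quotient.inductionOn x (fun k => congrArg (qmk p) (one_mul k))
  mul_one x := Quotient.inductionOn x (fun k => congrArg (qmk p) (mul_one k))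
  zero_mul x := Quotient.inductionOn x (fun k => congrArg (qmk p) (zero_mul k))
  mul_zero x := Quotient.inductionOn x (fun k => congrArg (qmk p) (mul_zero k))
  mul_comm x y := Quotient.inductionOn₂ x y (fun k l => congrArg (qmk p) (mul_comm k l))
  left_distrib x y z := Quotient.inductionOn₃ x y z
    (fun k l m => congrArg (qmk p) (left_distrib k l m))
  right_distrib x y z := Quotient.inductionOn₃ x y z
    (fun k l m => congrArg (qmk p) (right_distrib k l m))

theorem rel_c1 : ¬ rel p p.c 1 := by
  rintro (⟨h, -⟩ | ⟨-, -, n, h1, h2⟩)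
  · exact p.hc h
  · exact p.hc1 ⟨n, by simpa using h1, by simpa using h2⟩

noncomputable instance : IdemTOSemifield (KQ p) where
  add_eq_max x y := Quotient.inductionOn₂ x y (fun k l => by
    show qmk p k + qmk p l = max (qmk p k) (qmk p l)
    rw [qmk_add, IdemTOSemifield.add_eq_max, qmk_max])
  exists_inv x := Quotient.inductionOn x (fun k hk => by
    obtain ⟨d, hd⟩ := IdemTOSemifield.exists_inv k (fun h0 => hk (by
      show qmk p k = 0
      rw [qmk_eq_zero_iff]; exact h0))
    exact ⟨qmk p d, by show qmk p k * qmk p d = 1; rw [qmk_mul, hd]; rfl⟩)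
  exists_nontrivial_unit := by
    refine ⟨qmk p p.c, ?_, ?_⟩
    · rw [Ne, qmk_eq_zero_iff]; exact p.hc
    · rw [qmk_one, Ne, qmk_eq_iff]; exact rel_c1 p

/-- The quotient map as a ring homomorphism. -/
def qHom : K →+* KQ p where
  toFun := qmk p
  map_one' := rfl
  map_mul' k l := (qmk_mul p k l).symm
  map_zero' := rfl
  map_add' k l := (qmk_add p k l).symm

theorem qHom_continuous :
    @Continuous K (KQ p) (canonicalTopology K) (canonicalTopology (KQ p)) (qHom p) := by
  letI : TopologicalSpace K := canonicalTopology K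
  letI : TopologicalSpace (KQ p) := canonicalTopology (KQ p)
  rw [canonicalTopology, canonicalTopology, continuous_generateFrom_iff]
  rintro s (⟨x, hx, rfl⟩ | ⟨x, hx, rfl⟩)
  · apply isOpen_of_zero_imp
    intro h0
    exact absurd (Set.eq_of_mem_singleton h0).symm (by
      intro h; exact hx (by rw [h]; rfl))
  · apply isOpen_of_zero_imp
    intro _
    obtain ⟨l, hl⟩ := Quotient.exists_rep x
    have hl0 : l ≠ 0 := by
      intro h0
      apply hx
      rw [← hl, h0]
      rfl
    refine ⟨l, hl0, fun k hk => ?_⟩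
    simp only [Set.mem_preimage, Set.mem_Iic]
    rw [show qHom p k = qmk p k from rfl, ← hl]
    exact qmk_mono p hk

end KQuot


universe u

/-- A witness that the prime congruence `P` belongs to `Cont A`: a continuous homomorphism to a
totally ordered semifield (with its canonical topology) whose congruence kernel is `P` and whose
image contains an element other than `0` and `1`. -/
structure ContWitness {A : Type u} [CommSemiring A] (τ : TopologicalSpace A) (P : RingCon A) :
    Type (u + 1) where
  K : Type u
  [instK : IdemTOSemifield K]
  v : A →+* K
  cont : @Continuous A K τ (canonicalTopology K) v
  ker : ∀ f g : A, P f g ↔ v f = v g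
  nontrivialImage : ∃ x : K, x ∈ Set.range ⇑v ∧ x ≠ 0 ∧ x ≠ 1

/-- `P ∈ Cont A` for a topological semiring `(A, τ)`. -/
def InCont {A : Type u} [CommSemiring A] (τ : TopologicalSpace A) (P : RingCon A) : Prop :=
  Nonempty (ContWitness τ P)


open ITOS in
theorem arch_of_max {A : Type u} [CommSemiring A] (tA : TopologicalSpace A)
    {K : Type u} [IdemTOSemifield K]
    (v : A →+* K) (hcont : @Continuous A K tA (canonicalTopology K) v)
    (P : RingCon A) (hker : ∀ f g : A, P f g ↔ v f = v g)
    (hmax : ∀ Q : RingCon A, InCont tA Q → (∀ f g : A, P f g → Q f g) → Q = P)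
    (f g f' g' : A) (hf : v f ≠ 0) (hg : v g ≠ 0) (hf' : v f' ≠ 0) (hg' : v g' ≠ 0)
    (hgf : v g < v f) : ∃ n : ℕ, v f' * (v g) ^ n ≤ v g' * (v f) ^ n := by
  by_contra hbad'
  push_neg at hbad'
  set a := v g with hadef
  set b := v f with hbdef
  have hbad : ∀ n : ℕ, v g' * b ^ n < v f' * a ^ n := hbad'
  -- choose the element whose class is not 1
  have hnontriv : ¬ ((∃ n : ℕ, v f' * a ^ n ≤ b ^ n ∧ a ^ n ≤ v f' * b ^ n) ∧
      (∃ n : ℕ, v g' * a ^ n ≤ b ^ n ∧ a ^ n ≤ v g' * b ^ n)) := by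
    rintro ⟨⟨n1, h1, -⟩, ⟨n2, -, h2⟩⟩
    have : v f' * a ^ (n1 + n2) ≤ v g' * b ^ (n1 + n2) := by
      calc v f' * a ^ (n1 + n2) = (v f' * a ^ n1) * a ^ n2 := by ring
        _ ≤ b ^ n1 * a ^ n2 := mul_le_mul_l h1 _
        _ ≤ b ^ n1 * (v g' * b ^ n2) := by
            rw [mul_comm (b ^ n1) (a ^ n2), mul_comm (b ^ n1) _]
            exact mul_le_mul_l h2 _
        _ = v g' * b ^ (n1 + n2) := by ring
    exact absurd this (not_le.mpr (hbad (n1 + n2)))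
  have hc : ∃ c : K, c ≠ 0 ∧ ¬ ∃ n : ℕ, c * a ^ n ≤ b ^ n ∧ a ^ n ≤ c * b ^ n := by
    by_cases h1 : ∃ n : ℕ, v f' * a ^ n ≤ b ^ n ∧ a ^ n ≤ v f' * b ^ n
    · exact ⟨v g', hg', fun h2 => hnontriv ⟨h1, h2⟩⟩
    · exact ⟨v f', hf', h1⟩
  obtain ⟨c, hc0, hc1⟩ := hc
  set p : KQuot.Pack K := ⟨a, b, hg, hgf, c, hc0, hc1⟩ with hp
  set v' : A →+* KQuot.KQ p := (KQuot.qHom p).comp v with hv'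
  set Q : RingCon A :=
    { r := fun x y => v' x = v' y
      iseqv := ⟨fun _ => rfl, Eq.symm, Eq.trans⟩
      mul' := fun {w x y z} h h' => by
        show v' (w * y) = v' (x * z)
        rw [map_mul, map_mul, (h : v' w = v' x), (h' : v' y = v' z)]
      add' := fun {w x y z} h h' => by
        show v' (w + y) = v' (x + z)
        rw [map_add, map_add, (h : v' w = v' x), (h' : v' y = v' z)] } with hQdef
  have hQr : ∀ x y : A, Q x y ↔ v' x = v' y := fun x y => Iff.rfl
  have hdist : KQuot.qmk p (v f') ≠ KQuot.qmk p (v g') := by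
    rw [Ne, KQuot.qmk_eq_iff]
    rintro (⟨h0, -⟩ | ⟨-, -, n, h1, -⟩)
    · exact hf' h0
    · exact absurd h1 (not_le.mpr (hbad n))
  have hQin : InCont tA Q := by
    letI : TopologicalSpace A := tA
    letI : TopologicalSpace K := canonicalTopology K
    letI : TopologicalSpace (KQuot.KQ p) := canonicalTopology (KQuot.KQ p)
    have hcont' : Continuous ⇑v' := by
      rw [hv']
      simp only [RingHom.coe_comp]
      exact Continuous.comp (KQuot.qHom_continuous p) hcont
    refine ⟨{ K := KQuot.KQ p
              v := v'
              cont := hcont'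
              ker := fun x y => Iff.rfl
              nontrivialImage := ?_ }⟩
    rcases eq_or_ne (KQuot.qmk p (v f')) 1 with h1 | h1
    · refine ⟨v' g', ⟨g', rfl⟩, ?_, ?_⟩
      · rw [show v' g' = KQuot.qmk p (v g') from rfl, Ne, KQuot.qmk_eq_zero_iff]
        exact hg'
      · rw [show v' g' = KQuot.qmk p (v g') from rfl]
        exact fun h => hdist (h1.trans h.symm)
    · refine ⟨v' f', ⟨f', rfl⟩, ?_, h1⟩
      rw [show v' f' = KQuot.qmk p (v f') from rfl, Ne, KQuot.qmk_eq_zero_iff]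
      exact hf'
  have hQP : Q = P := hmax Q hQin (fun x y hxy => by
    rw [hker] at hxy
    show v' x = v' y
    rw [hv']
    simp only [RingHom.comp_apply, hxy])
  have hQfg : Q f g := by
    show v' f = v' g
    show KQuot.qmk p b = KQuot.qmk p a
    rw [KQuot.qmk_eq_iff]
    refine Or.inr ⟨hf, hg, 1, ?_, ?_⟩
    · simp only [pow_one]
      exact le_of_eq (mul_comm b a)
    · simp only [pow_one]
      exact mul_le_mul'' hgf.le hgf.le
  rw [hQP, hker] at hQfg
  exact absurd hQfg.symm (ne_of_lt hgf)



namespace Holder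

open ITOS

/-- rational density lemma -/
theorem ratdense1 {c c' : ℝ}
    (h : ∀ (m : ℤ) (n : ℕ), 0 < n → (m : ℝ)/(n : ℝ) ≤ c → (m : ℝ)/(n : ℝ) ≤ c') : c ≤ c' := by
  by_contra hcc
  push_neg at hcc
  obtain ⟨q, hq1, hq2⟩ := exists_rat_btwn hcc
  have hq : (q : ℝ) = ((q.num : ℝ))/((q.den : ℝ)) := by
    rw [Rat.cast_def]
  have h1 : ((q.num : ℝ))/((q.den : ℝ)) ≤ c := by rw [← hq]; exact hq2.le
  have h2 := h q.num q.den q.pos h1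
  rw [← hq] at h2
  exact absurd (lt_of_le_of_lt h2 hq1) (lt_irrefl _)

theorem ratdense {c c' : ℝ}
    (h : ∀ (m : ℤ) (n : ℕ), 0 < n → ((m : ℝ)/(n : ℝ) ≤ c ↔ (m : ℝ)/(n : ℝ) ≤ c')) : c = c' :=
  le_antisymm (ratdense1 (fun m n hn hm => (h m n hn).mp hm))
    (ratdense1 (fun m n hn hm => (h m n hn).mpr hm))

variable {K : Type u_5} [IdemTOSemifield K]

theorem unit_ne_zero (u : Kˣ) : (u : K) ≠ 0 := by
  intro h
  apply zero_ne_one' (K := K)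
  rw [← u.mul_inv, h, zero_mul]

/-- integer powers of a unit, coerced to `K` -/
def zp (eU : Kˣ) (m : ℤ) : K := ((eU ^ m : Kˣ) : K)

theorem zp_add (eU : Kˣ) (m m' : ℤ) : zp eU (m + m') = zp eU m * zp eU m' := by
  rw [zp, zp, zp, zpow_add, Units.val_mul]

theorem zp_zero (eU : Kˣ) : zp eU 0 = 1 := by rw [zp, zpow_zero, Units.val_one]

theorem zp_ne_zero (eU : Kˣ) (m : ℤ) : zp eU m ≠ 0 := unit_ne_zero _

theorem zp_natCast (eU : Kˣ) (n : ℕ) : zp eU (n : ℤ) = (eU : K) ^ n := by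
  rw [zp, zpow_natCast, Units.val_pow_eq_pow_val]

theorem zp_one (eU : Kˣ) : zp eU 1 = (eU : K) := by
  rw [show (1 : ℤ) = ((1 : ℕ) : ℤ) from rfl, zp_natCast, pow_one]

theorem zp_pow (eU : Kˣ) (m : ℤ) (c : ℕ) : (zp eU m) ^ c = zp eU (m * c) := by
  rw [zp, zp, ← Units.val_pow_eq_pow_val, ← zpow_natCast (eU ^ m) c, ← zpow_mul]

theorem pow_le_pow_exp {e : K} (he : 1 ≤ e) {i j : ℕ} (hij : i ≤ j) : e ^ i ≤ e ^ j := by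
  obtain ⟨c, rfl⟩ := Nat.exists_eq_add_of_le hij
  calc e ^ i = e ^ i * 1 := (mul_one _).symm
    _ ≤ e ^ i * e ^ c := by
        rw [mul_comm (e ^ i) 1, mul_comm (e ^ i) (e ^ c)]
        exact mul_le_mul_l (by calc (1:K) = 1 ^ c := (one_pow c).symm
          _ ≤ e ^ c := pow_le_pow' he c) _
    _ = e ^ (i + c) := by rw [pow_add]

theorem zp_mono {eU : Kˣ} (he : 1 < (eU : K)) {m m' : ℤ} (h : m ≤ m') :
    zp eU m ≤ zp eU m' := by
  obtain ⟨c, hc⟩ := Int.le.dest h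
  rw [← hc, zp_add, zp_natCast]
  calc zp eU m = zp eU m * 1 := (mul_one _).symm
    _ ≤ zp eU m * (eU : K) ^ c := by
        rw [mul_comm _ (1:K), mul_comm _ ((eU:K) ^ c)]
        exact mul_le_mul_l (by calc (1:K) = 1 ^ c := (one_pow _).symm
          _ ≤ (eU:K) ^ c := pow_le_pow' he.le _) _

theorem zp_strict {eU : Kˣ} (he : 1 < (eU : K)) {m m' : ℤ} (h : m < m') :
    zp eU m < zp eU m' := by
  obtain ⟨c, hc⟩ := Int.le.dest h.le
  have hc0 : 0 < c := by omega
  rw [← hc, zp_add, zp_natCast]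
  have h1 : (1 : K) < (eU : K) ^ c := by
    calc (1:K) = 1 ^ c := (one_pow _).symm
      _ < (eU:K) ^ c := pow_lt_pow' he (fun h0 => zero_ne_one' h0.symm) hc0
  calc zp eU m = zp eU m * 1 := (mul_one _).symm
    _ < zp eU m * (eU : K) ^ c := by
        rw [mul_comm _ (1:K), mul_comm _ ((eU:K) ^ c)]
        exact mul_lt_mul_r h1 (zp_ne_zero eU m)

theorem zp_le_iff {eU : Kˣ} (he : 1 < (eU : K)) {m m' : ℤ} :
    zp eU m ≤ zp eU m' ↔ m ≤ m' := by
  constructor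
  · intro h
    by_contra hm
    push_neg at hm
    exact absurd h (not_le.mpr (zp_strict he hm))
  · exact zp_mono he

theorem mul_zp_le_iff (eU : Kˣ) (t : ℤ) {x y : K} :
    x * zp eU t ≤ y ↔ x ≤ y * zp eU (-t) := by
  constructor
  · intro h
    have := mul_le_mul_l h (zp eU (-t))
    calc x = x * (zp eU t * zp eU (-t)) := by rw [← zp_add, add_neg_cancel, zp_zero, mul_one]
      _ = x * zp eU t * zp eU (-t) := by ring
      _ ≤ y * zp eU (-t) := this
  · intro h
    have := mul_le_mul_l h (zp eU t)
    calc x * zp eU t ≤ y * zp eU (-t) * zp eU t := this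
      _ = y * (zp eU (-t) * zp eU t) := by ring
      _ = y := by rw [← zp_add, neg_add_cancel, zp_zero, mul_one]

/-- from the rational characterization, conclude the value of the rpow. -/
theorem char_rpow {E t : NNReal} (hE : 1 < E) (ht : t ≠ 0) {c : ℝ}
    (h : ∀ (m : ℤ) (n : ℕ), 0 < n → ((m : ℝ)/(n : ℝ) ≤ c ↔ ((E:ℝ)) ^ m ≤ ((t:ℝ)) ^ n)) :
    E ^ c = t := by
  have hER : (1:ℝ) < (E:ℝ) := by exact_mod_cast hE
  have hE0 : (0:ℝ) < (E:ℝ) := lt_trans zero_lt_one hER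
  have hE1 : ((E:ℝ)) ≠ 1 := ne_of_gt hER
  have ht0 : (0:ℝ) < (t:ℝ) := by
    have : t ≠ 0 := ht
    positivity
  set c' := Real.logb E t with hc'
  have key : ∀ (m : ℤ) (n : ℕ), 0 < n → (((E:ℝ)) ^ m ≤ ((t:ℝ)) ^ n ↔ (m:ℝ)/(n:ℝ) ≤ c') := by
    intro m n hn
    have hnR : (0:ℝ) < (n:ℝ) := by exact_mod_cast hn
    have h1 : ((E:ℝ)) ^ m = ((E:ℝ)) ^ ((m:ℝ)) := (Real.rpow_intCast _ m).symm
    have h2 : ((t:ℝ)) ^ n = ((E:ℝ)) ^ (c' * (n:ℝ)) := by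
      rw [Real.rpow_mul hE0.le, Real.rpow_logb hE0 hE1 ht0, ← Real.rpow_natCast _ n]
    rw [h1, h2, Real.rpow_le_rpow_left_iff hER, div_le_iff₀ hnR]
  have hcc : c = c' := ratdense (fun m n hn => (h m n hn).trans (key m n hn))
  apply NNReal.coe_injective
  rw [NNReal.coe_rpow, hcc, hc', Real.rpow_logb hE0 hE1 ht0]


theorem zp_shift (eU : Kˣ) (m : ℤ) (x : K) :
    zp eU m ≤ x ↔ ((eU : K)) ^ (m.toNat) ≤ x * ((eU : K)) ^ ((-m).toNat) := by
  constructor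
  · intro h
    calc ((eU:K)) ^ (m.toNat) = zp eU m * ((eU:K)) ^ ((-m).toNat) := by
          rw [← zp_natCast, ← zp_natCast, ← zp_add]
          congr 1
          omega
      _ ≤ x * ((eU:K)) ^ ((-m).toNat) := mul_le_mul_l h _
  · intro h
    rw [show zp eU m = zp eU ((m.toNat : ℕ) : ℤ) * zp eU (-(((-m).toNat : ℕ) : ℤ)) from by
      rw [← zp_add]; congr 1; omega]
    rw [mul_zp_le_iff, neg_neg, zp_natCast, zp_natCast]
    exact h

theorem real_shift {E' : ℝ} (hE0 : (0:ℝ) < E') (m : ℤ) {X : ℝ} :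
    (E' ^ (m.toNat) ≤ X * E' ^ ((-m).toNat)) ↔ E' ^ m ≤ X := by
  have h1 : E' ^ (m.toNat) = E' ^ m * E' ^ ((-m).toNat) := by
    rw [← zpow_natCast E' m.toNat, ← zpow_natCast E' ((-m).toNat), ← zpow_add₀ (ne_of_gt hE0)]
    congr 1
    omega
  rw [h1]
  exact mul_le_mul_iff_of_pos_right (by positivity)

section L

variable {A : Type u_6} [CommSemiring A] (v : A →+* K) (eU : Kˣ)

/-- the set of rational approximations to the logarithm -/
def TT (f : A) : Set ℝ :=
  {r : ℝ | ∃ m : ℤ, ∃ n : ℕ, 0 < n ∧ r = (m : ℝ)/(n : ℝ) ∧ zp eU m ≤ (v f) ^ n}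

/-- the logarithm of `v f` in base `e` -/
noncomputable def LL (f : A) : ℝ := sSup (TT v eU f)

variable (he : 1 < (eU : K)) (h₀ : A) (hh₀ : v h₀ = (eU : K))
  (harch : ∀ f g f' g' : A, v f ≠ 0 → v g ≠ 0 → v f' ≠ 0 → v g' ≠ 0 →
     v g < v f → ∃ n : ℕ, v f' * (v g) ^ n ≤ v g' * (v f) ^ n)

theorem one_ne_zero'' : (1 : K) ≠ 0 := fun h => zero_ne_one' h.symm

include he hh₀ harch in
theorem arch1 {f : A} (hf : v f ≠ 0) : ∃ N : ℕ, v f ≤ (eU : K) ^ N := by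
  have h1 : v (1 : A) = 1 := map_one v
  have := harch h₀ 1 f 1 (by rw [hh₀]; exact unit_ne_zero eU) (by rw [h1]; exact one_ne_zero'')
    hf (by rw [h1]; exact one_ne_zero'') (by rw [h1, hh₀]; exact he)
  obtain ⟨N, hN⟩ := this
  refine ⟨N, ?_⟩
  rw [h1, hh₀] at hN
  simpa using hN

include he hh₀ harch in
theorem arch2 {f : A} (hf : v f ≠ 0) : ∃ N : ℕ, (1 : K) ≤ v f * (eU : K) ^ N := by
  have h1 : v (1 : A) = 1 := map_one v
  have := harch h₀ 1 1 f (by rw [hh₀]; exact unit_ne_zero eU) (by rw [h1]; exact one_ne_zero'')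
    (by rw [h1]; exact one_ne_zero'') hf (by rw [h1, hh₀]; exact he)
  obtain ⟨N, hN⟩ := this
  refine ⟨N, ?_⟩
  rw [h1, hh₀] at hN
  simpa using hN

include he hh₀ harch in
theorem TT_nonempty {f : A} (hf : v f ≠ 0) : (TT v eU f).Nonempty := by
  obtain ⟨N, hN⟩ := arch2 v eU he h₀ hh₀ harch hf
  refine ⟨((-(N:ℤ) : ℤ) : ℝ)/((1:ℕ) : ℝ), -(N:ℤ), 1, Nat.one_pos, rfl, ?_⟩
  rw [pow_one]
  have key : zp eU (-(N:ℤ)) * ((eU:K) ^ N) = 1 := by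
    rw [← zp_natCast, ← zp_add, neg_add_cancel, zp_zero]
  calc zp eU (-(N:ℤ)) = zp eU (-(N:ℤ)) * 1 := (mul_one _).symm
    _ ≤ zp eU (-(N:ℤ)) * (v f * (eU:K) ^ N) := by
        rw [mul_comm _ (1:K), mul_comm _ (v f * _)]
        exact mul_le_mul_l hN _
    _ = v f * (zp eU (-(N:ℤ)) * (eU:K) ^ N) := by ring
    _ = v f := by rw [key, mul_one]

include he hh₀ harch in
theorem TT_bdd {f : A} (hf : v f ≠ 0) : BddAbove (TT v eU f) := by
  obtain ⟨N, hN⟩ := arch1 v eU he h₀ hh₀ harch hf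
  refine ⟨(N : ℝ), ?_⟩
  rintro r ⟨m, n, hn, rfl, hm⟩
  have h2 : zp eU m ≤ zp eU ((N : ℤ) * n) := by
    calc zp eU m ≤ (v f) ^ n := hm
      _ ≤ ((eU : K) ^ N) ^ n := pow_le_pow' hN n
      _ = zp eU ((N:ℤ) * n) := by rw [← zp_natCast, zp_pow]
  have h3 : m ≤ (N : ℤ) * n := (zp_le_iff he).mp h2
  rw [div_le_iff₀ (by exact_mod_cast hn)]
  exact_mod_cast h3

include he hh₀ harch in
theorem master_le {f : A} (hf : v f ≠ 0) {m : ℤ} {n : ℕ} (hn : 0 < n)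
    (h : zp eU m ≤ (v f) ^ n) : (m : ℝ)/(n : ℝ) ≤ LL v eU f :=
  le_csSup (TT_bdd v eU he h₀ hh₀ harch hf) ⟨m, n, hn, rfl, h⟩

include he hh₀ harch in
theorem master_ge {f : A} (hf : v f ≠ 0) {m : ℤ} {n : ℕ} (hn : 0 < n)
    (h : (m : ℝ)/(n : ℝ) ≤ LL v eU f) : zp eU m ≤ (v f) ^ n := by
  have hnR : (0 : ℝ) < (n : ℝ) := by exact_mod_cast hn
  rcases lt_or_eq_of_le h with hlt | heq
  ·  -- strictly below the sup: dominated by some element of TT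
    obtain ⟨r, hrT, hmr⟩ := exists_lt_of_lt_csSup (TT_nonempty v eU he h₀ hh₀ harch hf) hlt
    obtain ⟨m', n', hn', rfl, hm'⟩ := hrT
    have hn'R : (0 : ℝ) < (n' : ℝ) := by exact_mod_cast hn'
    have hcross : m * n' ≤ m' * n := by
      have := (div_lt_div_iff₀ hnR hn'R).mp hmr
      exact_mod_cast le_of_lt (by exact_mod_cast this)
    have h1 : zp eU (m * n') ≤ zp eU (m' * n) := zp_mono he hcross
    have h2 : zp eU (m' * n) ≤ (v f) ^ (n * n') := by
      calc zp eU (m' * n) = (zp eU m') ^ n := by rw [zp_pow]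
        _ ≤ ((v f) ^ n') ^ n := pow_le_pow' hm' n
        _ = (v f) ^ (n * n') := by rw [← pow_mul, Nat.mul_comm]
    have h3 : (zp eU m) ^ n' ≤ ((v f) ^ n) ^ n' := by
      calc (zp eU m) ^ n' = zp eU (m * n') := zp_pow eU m n'
        _ ≤ (v f) ^ (n * n') := le_trans h1 h2
        _ = ((v f) ^ n) ^ n' := pow_mul _ _ _
    exact le_of_pow_le_pow hn' h3
  · -- boundary case
    by_contra hno
    have h2 : (v f) ^ n < zp eU m := lt_of_not_ge hno
    set mp := m.toNat with hmp
    set mm := (-m).toNat with hmm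
    have hmpm : (mp : ℤ) = m + (mm : ℤ) := by omega
    have h3 : (v f) ^ n * (eU : K) ^ mm < (eU : K) ^ mp := by
      calc (v f) ^ n * (eU : K) ^ mm < zp eU m * (eU : K) ^ mm :=
            mul_lt_mul_r h2 (pow_ne_zero'' (unit_ne_zero eU) mm)
        _ = (eU : K) ^ mp := by
            rw [← zp_natCast, ← zp_natCast, ← zp_add, ← hmpm]
    -- apply the Archimedean property
    have hvg : v (f ^ n * h₀ ^ mm) = (v f) ^ n * (eU : K) ^ mm := by
      rw [map_mul, map_pow, map_pow, hh₀]
    have hvf : v (h₀ ^ mp) = (eU : K) ^ mp := by rw [map_pow, hh₀]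
    have hg0 : v (f ^ n * h₀ ^ mm) ≠ 0 := by
      rw [hvg]
      exact mul_ne_zero' (pow_ne_zero'' hf n) (pow_ne_zero'' (unit_ne_zero eU) mm)
    have hf0 : v (h₀ ^ mp) ≠ 0 := by rw [hvf]; exact pow_ne_zero'' (unit_ne_zero eU) mp
    have hh0 : v h₀ ≠ 0 := by rw [hh₀]; exact unit_ne_zero eU
    have h4 : v (f ^ n * h₀ ^ mm) < v (h₀ ^ mp) := by rw [hvg, hvf]; exact h3
    obtain ⟨N, hN⟩ := harch (h₀ ^ mp) (f ^ n * h₀ ^ mm) h₀ 1 hf0 hg0 hh0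
      (by rw [map_one]; exact one_ne_zero'') h4
    rw [hvg, hvf, hh₀, map_one, one_mul] at hN
    have hN0 : 0 < N := by
      rcases Nat.eq_zero_or_pos N with h0 | h0
      · rw [h0] at hN
        simp only [pow_zero, mul_one] at hN
        exact absurd hN (not_le.mpr he)
      · exact h0
    -- rearrange: (v f)^(n*N) ≤ zp eU (m*N - 1)
    have h5 : (v f) ^ (n * N) ≤ zp eU (m * N - 1) := by
      have h51 : (v f) ^ (n * N) * zp eU ((mm : ℤ) * N + 1) ≤ zp eU ((mp : ℤ) * N) := by
        calc (v f) ^ (n * N) * zp eU ((mm : ℤ) * N + 1)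
            = (eU : K) * (((v f) ^ n) ^ N * ((eU : K) ^ mm) ^ N) := by
              rw [zp_add, ← zp_pow, zp_natCast, zp_one, pow_mul]
              ring
          _ ≤ ((eU : K) ^ mp) ^ N := by
              have : ((v f) ^ n * (eU : K) ^ mm) ^ N ≤ ((eU : K) ^ mp) ^ N := by
                have := hN
                calc ((v f) ^ n * (eU : K) ^ mm) ^ N
                    = (v f ^ n * (eU:K) ^ mm) ^ N := rfl
                  _ ≤ ((eU : K) ^ mp) ^ N := by
                      have h52 : (v f ^ n * (eU:K) ^ mm) ^ N ≤ ((eU:K) ^ mp) ^ N :=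
                        pow_le_pow' h3.le N
                      exact h52
              calc (eU : K) * (((v f) ^ n) ^ N * ((eU : K) ^ mm) ^ N)
                  = (eU : K) * ((v f ^ n * (eU:K) ^ mm) ^ N) := by rw [mul_pow]
                _ ≤ (eU : K) * (v f ^ n * (eU:K) ^ mm) ^ N := le_refl _
                _ ≤ ((eU : K) ^ mp) ^ N := hN
          _ = zp eU ((mp : ℤ) * N) := by rw [← zp_natCast, zp_pow]
      rw [mul_zp_le_iff] at h51
      calc (v f) ^ (n * N) ≤ zp eU ((mp:ℤ) * N) * zp eU (-((mm:ℤ) * N + 1)) := h51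
        _ = zp eU ((mp:ℤ) * N - (mm:ℤ)*N - 1) := by
            rw [← zp_add]
            congr 1
            ring
        _ = zp eU (m * N - 1) := by
            congr 1
            rw [show ((mp:ℤ)) = m + (mm:ℤ) from hmpm]
            ring
    -- now every element of TT is at most (m*N-1)/(n*N) < m/n, contradiction
    have hub : LL v eU f ≤ ((m * N - 1 : ℤ) : ℝ) / ((n * N : ℕ) : ℝ) := by
      apply csSup_le (TT_nonempty v eU he h₀ hh₀ harch hf)
      rintro r ⟨m', n', hn', rfl, hm'⟩
      have key : (zp eU m') ^ (n * N) ≤ (zp eU (m * N - 1)) ^ n' := by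
        calc (zp eU m') ^ (n * N) ≤ ((v f) ^ n') ^ (n * N) := pow_le_pow' hm' _
          _ = ((v f) ^ (n * N)) ^ n' := by rw [← pow_mul, ← pow_mul, Nat.mul_comm]
          _ ≤ (zp eU (m * N - 1)) ^ n' := pow_le_pow' h5 n'
      rw [zp_pow, zp_pow] at key
      have hcross : m' * (n * N : ℕ) ≤ (m * N - 1) * n' := (zp_le_iff he).mp key
      have hnN : (0:ℝ) < ((n * N : ℕ) : ℝ) := by
        have : 0 < n * N := Nat.mul_pos hn hN0
        exact_mod_cast this
      have hn'R : (0 : ℝ) < (n' : ℝ) := by exact_mod_cast hn'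
      rw [div_le_div_iff₀ hn'R hnN]
      exact_mod_cast hcross
    have hlt2 : ((m * N - 1 : ℤ) : ℝ) / ((n * N : ℕ) : ℝ) < (m:ℝ)/(n:ℝ) := by
      have hnN : (0:ℝ) < ((n * N : ℕ) : ℝ) := by
        have : 0 < n * N := Nat.mul_pos hn hN0
        exact_mod_cast this
      rw [div_lt_div_iff₀ hnN hnR]
      push_cast
      have hNR : (0:ℝ) < (N : ℝ) := by exact_mod_cast hN0
      nlinarith
    rw [← heq] at hub
    exact absurd (lt_of_le_of_lt hub hlt2) (lt_irrefl _)



include he hh₀ harch in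
theorem L_iff {f : A} (hf : v f ≠ 0) {m : ℤ} {n : ℕ} (hn : 0 < n) :
    (m : ℝ)/(n : ℝ) ≤ LL v eU f ↔ zp eU m ≤ (v f) ^ n :=
  ⟨master_ge v eU he h₀ hh₀ harch hf hn, master_le v eU he h₀ hh₀ harch hf hn⟩

theorem zp_lt_iff {eU' : Kˣ} (he' : 1 < (eU' : K)) {m m' : ℤ} :
    zp eU' m < zp eU' m' ↔ m < m' := by
  constructor
  · intro h
    by_contra hm
    push_neg at hm
    exact absurd h (not_lt.mpr (zp_mono he' hm))
  · exact zp_strict he'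

theorem rat_repr (q : ℚ) : ((q.num : ℝ))/((q.den : ℝ)) = (q : ℝ) := by
  rw [Rat.cast_def]

include he hh₀ harch in
theorem L_notmem {f : A} (hf : v f ≠ 0) {q : ℚ} (hq : LL v eU f < (q : ℝ)) :
    (v f) ^ q.den < zp eU q.num := by
  by_contra hno
  have hle : zp eU q.num ≤ (v f) ^ q.den := not_lt.mp hno
  have h1 := master_le v eU he h₀ hh₀ harch hf q.pos hle
  rw [rat_repr] at h1
  exact absurd (lt_of_le_of_lt h1 hq) (lt_irrefl _)

include he hh₀ harch in
theorem L_mem {f : A} (hf : v f ≠ 0) {q : ℚ} (hq : (q : ℝ) ≤ LL v eU f) :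
    zp eU q.num ≤ (v f) ^ q.den := by
  apply master_ge v eU he h₀ hh₀ harch hf q.pos
  rw [rat_repr]
  exact hq

theorem rat_add_repr (q1 q2 : ℚ) :
    ((q1.num * (q2.den : ℤ) + q2.num * (q1.den : ℤ) : ℤ) : ℝ) / (((q1.den * q2.den : ℕ)) : ℝ)
      = (q1 : ℝ) + (q2 : ℝ) := by
  have h1 : ((q1.den : ℝ)) ≠ 0 := by
    have := q1.pos
    positivity
  have h2 : ((q2.den : ℝ)) ≠ 0 := by
    have := q2.pos
    positivity
  rw [← rat_repr q1, ← rat_repr q2]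
  push_cast
  field_simp

include he hh₀ harch in
theorem L_mul {f g : A} (hf : v f ≠ 0) (hg : v g ≠ 0) :
    LL v eU (f * g) = LL v eU f + LL v eU g := by
  have hfg : v (f * g) ≠ 0 := by rw [map_mul]; exact mul_ne_zero' hf hg
  apply le_antisymm
  · apply ratdense1
    intro m n hn hm
    by_contra hq
    push_neg at hq
    have hnR : (0:ℝ) < (n:ℝ) := by exact_mod_cast hn
    set δ := ((m:ℝ)/(n:ℝ) - (LL v eU f + LL v eU g))/2 with hδdef
    have hδ : 0 < δ := by rw [hδdef]; linarith
    obtain ⟨q1, hq11, hq12⟩ := exists_rat_btwn (show LL v eU f < LL v eU f + δ by linarith)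
    obtain ⟨q2, hq21, hq22⟩ := exists_rat_btwn (show LL v eU g < LL v eU g + δ by linarith)
    have hmem1 := L_notmem v eU he h₀ hh₀ harch hf hq11
    have hmem2 := L_notmem v eU he h₀ hh₀ harch hg hq21
    have hge := master_ge v eU he h₀ hh₀ harch hfg hn hm
    rw [map_mul] at hge
    set m1 := q1.num; set n1 := q1.den; set m2 := q2.num; set n2 := q2.den
    have hn1 := q1.pos; have hn2 := q2.pos
    -- raise and combine
    have hs1 : (v f) ^ (n1 * (n2 * n)) < zp eU (m1 * ((n2 * n : ℕ) : ℤ)) := by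
      calc (v f) ^ (n1 * (n2 * n)) = ((v f) ^ n1) ^ (n2 * n) := pow_mul _ _ _
        _ < (zp eU m1) ^ (n2 * n) :=
            pow_lt_pow' hmem1 (pow_ne_zero'' hf n1) (Nat.mul_pos hn2 hn)
        _ = zp eU (m1 * ((n2 * n : ℕ) : ℤ)) := zp_pow _ _ _
    have hs2 : (v g) ^ (n2 * (n1 * n)) < zp eU (m2 * ((n1 * n : ℕ) : ℤ)) := by
      calc (v g) ^ (n2 * (n1 * n)) = ((v g) ^ n2) ^ (n1 * n) := pow_mul _ _ _
        _ < (zp eU m2) ^ (n1 * n) :=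
            pow_lt_pow' hmem2 (pow_ne_zero'' hg n2) (Nat.mul_pos hn1 hn)
        _ = zp eU (m2 * ((n1 * n : ℕ) : ℤ)) := zp_pow _ _ _
    have hprod : (v f * v g) ^ (n1 * (n2 * n)) <
        zp eU (m1 * ((n2 * n : ℕ) : ℤ) + m2 * ((n1 * n : ℕ) : ℤ)) := by
      rw [mul_pow, zp_add]
      calc (v f) ^ (n1 * (n2 * n)) * (v g) ^ (n1 * (n2 * n))
          = (v f) ^ (n1 * (n2 * n)) * (v g) ^ (n2 * (n1 * n)) := by
            rw [show n1 * (n2 * n) = n2 * (n1 * n) from by ring]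
        _ < zp eU (m1 * ((n2 * n : ℕ) : ℤ)) * zp eU (m2 * ((n1 * n : ℕ) : ℤ)) := by
            calc (v f) ^ (n1 * (n2 * n)) * (v g) ^ (n2 * (n1 * n))
                < zp eU (m1 * ((n2 * n : ℕ) : ℤ)) * (v g) ^ (n2 * (n1 * n)) :=
                  mul_lt_mul_r hs1 (pow_ne_zero'' hg _)
              _ ≤ zp eU (m1 * ((n2 * n : ℕ) : ℤ)) * zp eU (m2 * ((n1 * n : ℕ) : ℤ)) := by
                  rw [mul_comm (zp eU _) ((v g) ^ _), mul_comm (zp eU (m1 * _)) (zp eU (m2 * _))]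
                  exact mul_le_mul_l hs2.le _
    have hup : zp eU (m * ((n1 * n2 : ℕ) : ℤ)) ≤ (v f * v g) ^ (n1 * (n2 * n)) := by
      calc zp eU (m * ((n1 * n2 : ℕ) : ℤ)) = (zp eU m) ^ (n1 * n2) := (zp_pow _ _ _).symm
        _ ≤ ((v f * v g) ^ n) ^ (n1 * n2) := pow_le_pow' hge _
        _ = (v f * v g) ^ (n1 * (n2 * n)) := by
            rw [← pow_mul, show n * (n1 * n2) = n1 * (n2 * n) from by ring]
    have hint : m * ((n1 * n2 : ℕ) : ℤ) <
        m1 * ((n2 * n : ℕ) : ℤ) + m2 * ((n1 * n : ℕ) : ℤ) :=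
      (zp_lt_iff he).mp (lt_of_le_of_lt hup hprod)
    -- contradiction with the choice of q1 q2
    have hreal : (m:ℝ)/(n:ℝ) < (q1 : ℝ) + (q2 : ℝ) := by
      rw [← rat_repr q1, ← rat_repr q2]
      have hn1R : (0:ℝ) < (n1:ℝ) := by exact_mod_cast hn1
      have hn2R : (0:ℝ) < (n2:ℝ) := by exact_mod_cast hn2
      have hcast : (m:ℝ) * ((n1:ℝ) * (n2:ℝ)) <
          (m1:ℝ) * ((n2:ℝ) * (n:ℝ)) + (m2:ℝ) * ((n1:ℝ) * (n:ℝ)) := by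
        exact_mod_cast hint
      rw [div_add_div _ _ (ne_of_gt hn1R) (ne_of_gt hn2R), div_lt_div_iff₀ hnR (by positivity)]
      nlinarith
    have : (m:ℝ)/(n:ℝ) < (m:ℝ)/(n:ℝ) := by
      calc (m:ℝ)/(n:ℝ) < (q1:ℝ) + (q2:ℝ) := hreal
        _ < LL v eU f + δ + (LL v eU g + δ) := by
            exact add_lt_add hq12 hq22
        _ = (m:ℝ)/(n:ℝ) := by rw [hδdef]; ring
    exact absurd this (lt_irrefl _)
  · apply ratdense1
    intro m n hn hm
    have hnR : (0:ℝ) < (n:ℝ) := by exact_mod_cast hn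
    apply le_of_forall_pos_le_add
    intro ε hε
    obtain ⟨q1, hq11, hq12⟩ := exists_rat_btwn
      (show LL v eU f - ε/2 < LL v eU f by linarith)
    obtain ⟨q2, hq21, hq22⟩ := exists_rat_btwn
      (show LL v eU g - ε/2 < LL v eU g by linarith)
    have hmem1 := L_mem v eU he h₀ hh₀ harch hf hq12.le
    have hmem2 := L_mem v eU he h₀ hh₀ harch hg hq22.le
    set m1 := q1.num; set n1 := q1.den; set m2 := q2.num; set n2 := q2.den
    have hn1 := q1.pos; have hn2 := q2.pos
    have hcomb : zp eU (m1 * ((n2:ℕ) : ℤ) + m2 * ((n1:ℕ) : ℤ)) ≤ (v (f * g)) ^ (n1 * n2) := by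
      rw [map_mul, mul_pow, zp_add]
      have h1 : zp eU (m1 * ((n2:ℕ) : ℤ)) ≤ (v f) ^ (n1 * n2) := by
        calc zp eU (m1 * ((n2:ℕ):ℤ)) = (zp eU m1) ^ n2 := (zp_pow _ _ _).symm
          _ ≤ ((v f) ^ n1) ^ n2 := pow_le_pow' hmem1 _
          _ = (v f) ^ (n1 * n2) := (pow_mul _ _ _).symm
      have h2 : zp eU (m2 * ((n1:ℕ) : ℤ)) ≤ (v g) ^ (n1 * n2) := by
        calc zp eU (m2 * ((n1:ℕ):ℤ)) = (zp eU m2) ^ n1 := (zp_pow _ _ _).symm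
          _ ≤ ((v g) ^ n2) ^ n1 := pow_le_pow' hmem2 _
          _ = (v g) ^ (n1 * n2) := by rw [← pow_mul, Nat.mul_comm]
      exact mul_le_mul'' h1 h2
    have hLfg := master_le v eU he h₀ hh₀ harch hfg (Nat.mul_pos hn1 hn2) hcomb
    have hrepr : ((m1 * ((n2:ℕ):ℤ) + m2 * ((n1:ℕ):ℤ) : ℤ) : ℝ) / (((n1 * n2 : ℕ)) : ℝ)
        = (q1 : ℝ) + (q2 : ℝ) := rat_add_repr q1 q2
    rw [hrepr] at hLfg
    calc (m:ℝ)/(n:ℝ) ≤ LL v eU f + LL v eU g := hm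
      _ ≤ (q1:ℝ) + ε/2 + ((q2:ℝ) + ε/2) := by
          have := hq11; have := hq21
          linarith
      _ = (q1:ℝ) + (q2:ℝ) + ε := by ring
      _ ≤ LL v eU (f * g) + ε := by linarith

include he hh₀ harch in
theorem L_one' : LL v eU (1 : A) = 0 := by
  have h1 : v (1 : A) ≠ 0 := by rw [map_one]; exact one_ne_zero''
  apply ratdense
  intro m n hn
  have hnR : (0:ℝ) < (n:ℝ) := by exact_mod_cast hn
  rw [L_iff v eU he h₀ hh₀ harch h1 hn, map_one, one_pow]
  rw [show (1:K) = zp eU 0 from (zp_zero eU).symm, zp_le_iff he]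
  rw [div_le_iff₀ hnR, zero_mul]
  exact_mod_cast Iff.rfl

include he hh₀ harch in
theorem L_h₀ : LL v eU h₀ = 1 := by
  have h1 : v h₀ ≠ 0 := by rw [hh₀]; exact unit_ne_zero eU
  apply ratdense
  intro m n hn
  have hnR : (0:ℝ) < (n:ℝ) := by exact_mod_cast hn
  rw [L_iff v eU he h₀ hh₀ harch h1 hn, hh₀]
  rw [show ((eU : K)) ^ n = zp eU ((n:ℕ) : ℤ) from (zp_natCast eU n).symm, zp_le_iff he]
  rw [div_le_one hnR]
  exact_mod_cast Iff.rfl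

include he hh₀ harch in
theorem L_mono' {f g : A} (hf : v f ≠ 0) (hg : v g ≠ 0) (h : v f ≤ v g) :
    LL v eU f ≤ LL v eU g := by
  apply ratdense1
  intro m n hn hm
  exact master_le v eU he h₀ hh₀ harch hg hn
    (le_trans (master_ge v eU he h₀ hh₀ harch hf hn hm) (pow_le_pow' h n))

include he hh₀ harch in
theorem L_pow {f : A} (hf : v f ≠ 0) (c : ℕ) : LL v eU (f ^ c) = c * LL v eU f := by
  induction c with
  | zero => rw [pow_zero, L_one' v eU he h₀ hh₀ harch]; simp
  | succ c ih =>
    have hfc : v (f ^ c) ≠ 0 := by rw [map_pow]; exact pow_ne_zero'' hf c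
    rw [pow_succ, L_mul v eU he h₀ hh₀ harch hfc hf, ih]
    push_cast
    ring

include he hh₀ harch in
theorem L_strict {f g : A} (hf : v f ≠ 0) (hg : v g ≠ 0) (h : v f < v g) :
    LL v eU f < LL v eU g := by
  have hh0 : v h₀ ≠ 0 := by rw [hh₀]; exact unit_ne_zero eU
  obtain ⟨N, hN⟩ := harch g f h₀ 1 hg hf hh0 (by rw [map_one]; exact one_ne_zero'') h
  rw [map_one, one_mul, hh₀] at hN
  have hN0 : 0 < N := by
    rcases Nat.eq_zero_or_pos N with h0 | h0
    · rw [h0] at hN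
      simp only [pow_zero, mul_one] at hN
      exact absurd hN (not_le.mpr he)
    · exact h0
  have hle : v (h₀ * f ^ N) ≤ v (g ^ N) := by
    rw [map_mul, map_pow, map_pow, hh₀]
    exact hN
  have h1 : v (h₀ * f ^ N) ≠ 0 := by
    rw [map_mul, map_pow, hh₀]
    exact mul_ne_zero' (unit_ne_zero eU) (pow_ne_zero'' hf N)
  have h2 : v (g ^ N) ≠ 0 := by rw [map_pow]; exact pow_ne_zero'' hg N
  have := L_mono' v eU he h₀ hh₀ harch h1 h2 hle
  rw [L_mul v eU he h₀ hh₀ harch hh0 (by rw [map_pow]; exact pow_ne_zero'' hf N),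
    L_h₀ v eU he h₀ hh₀ harch, L_pow v eU he h₀ hh₀ harch hf N,
    L_pow v eU he h₀ hh₀ harch hg N] at this
  have hNR : (0:ℝ) < (N:ℝ) := by exact_mod_cast hN0
  nlinarith


theorem L_congr {f g : A} (h : v f = v g) : LL v eU f = LL v eU g := by
  unfold LL TT
  rw [h]

include he hh₀ harch in
theorem char_of_compat {f : A} (hf : v f ≠ 0) {E t : NNReal} (hE : 1 < E) (ht : t ≠ 0)
    (hcompat : ∀ (mp mm n : ℕ), 0 < n →
      (((eU : K)) ^ mp ≤ (v f) ^ n * ((eU : K)) ^ mm ↔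
        ((E : ℝ)) ^ mp ≤ ((t : ℝ)) ^ n * ((E : ℝ)) ^ mm)) :
    E ^ (LL v eU f) = t := by
  have hER : (1:ℝ) < (E:ℝ) := by exact_mod_cast hE
  have hE0 : (0:ℝ) < (E:ℝ) := lt_trans zero_lt_one hER
  apply char_rpow hE ht
  intro m n hn
  rw [L_iff v eU he h₀ hh₀ harch hf hn, zp_shift, hcompat m.toNat (-m).toNat n hn,
    real_shift hE0 m]

end L




end Holder


/-!
Statement 10: if `P ∈ Cont A` is maximal with respect to inclusion, then there is a unique
semiring homomorphism `w : A → 𝕋` whose congruence kernel is `P` and such that `w ∘ ι` is the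
inclusion of `S` into `𝕋`.
-/

theorem maximal_inCont_unique_hom_to_trop {S A : Type u} [TropSub S] [CommSemiring A]
    (tA : TopologicalSpace A) (hadd : @ContinuousAdd A tA _) (hmul : @ContinuousMul A tA _)
    (ι : S →+* A) (hι : @Continuous S A (canonicalTopology S) tA ι)
    (P : RingCon A) (hP : InCont tA P)
    (hmax : ∀ Q : RingCon A, InCont tA Q → (∀ f g : A, P f g → Q f g) → Q = P) :
    ∃! w : A →+* Trop,
      (∀ f g : A, P f g ↔ w f = w g) ∧ ∀ b : S, w (ι b) = TropSub.emb (S := S) b := by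
  classical
  obtain ⟨wit⟩ := hP
  letI : IdemTOSemifield wit.K := wit.instK
  have hcont := wit.cont
  have hker := wit.ker
  set v : A →+* wit.K := wit.v with hvdef
  -- a nontrivial element of S above 1
  obtain ⟨s₀, hs₀⟩ := ITOS.exists_one_lt (K := S)
  set Eemb : S →+* Trop := TropSub.emb with hEembdef
  have hembinj : Function.Injective Eemb := TropSub.emb_injective
  set E : NNReal := Trop.toNNReal (Eemb s₀) with hEdef
  have hE1 : (1 : NNReal) < E := by
    have h := (ITOS.hom_lt_iff Eemb hembinj (a := (1:S)) (b := s₀)).mpr hs₀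
    rw [map_one] at h
    exact h
  have hE0 : (0 : NNReal) < E := lt_trans zero_lt_one hE1
  have hER : (1:ℝ) < (E:ℝ) := by exact_mod_cast hE1
  -- the composite S → K is injective
  set vι : S →+* wit.K := v.comp ι with hvιdef
  have hvι_cont : @Continuous S wit.K (canonicalTopology S) (canonicalTopology wit.K) vι := by
    letI : TopologicalSpace S := canonicalTopology S
    letI : TopologicalSpace A := tA
    letI : TopologicalSpace wit.K := canonicalTopology wit.K
    rw [hvιdef]
    simp only [RingHom.coe_comp]
    exact hcont.comp hι
  have hvι_inj : Function.Injective vι := ITOS.inj_of_continuous vι hvι_cont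
  -- the distinguished unit of K
  have he1 : (1:wit.K) < vι s₀ := by
    have h := (ITOS.hom_lt_iff vι hvι_inj (a := (1:S)) (b := s₀)).mpr hs₀
    rw [map_one] at h
    exact h
  have he0 : vι s₀ ≠ 0 := fun h => absurd (h ▸ he1) (not_lt.mpr (ITOS.zero_le' 1))
  obtain ⟨d, hd⟩ := IdemTOSemifield.exists_inv (vι s₀) he0
  set eU : wit.Kˣ := ⟨vι s₀, d, hd, by rw [mul_comm]; exact hd⟩ with heUdef
  have heUv : (eU : wit.K) = vι s₀ := rfl
  have he : 1 < (eU : wit.K) := he1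
  set h₀ : A := ι s₀ with hh₀def
  have hh₀ : v h₀ = (eU : wit.K) := rfl
  have harch : ∀ f g f' g' : A, v f ≠ 0 → v g ≠ 0 → v f' ≠ 0 → v g' ≠ 0 →
      v g < v f → ∃ n : ℕ, v f' * (v g) ^ n ≤ v g' * (v f) ^ n :=
    fun f g f' g' hf hg hf' hg' hgf =>
      arch_of_max tA v hcont P hker hmax f g f' g' hf hg hf' hg' hgf
  -- the candidate map
  set w0 : A → NNReal := fun f => if v f = 0 then 0 else E ^ (Holder.LL v eU f) with hw0def
  have hw0_zero : ∀ f : A, v f = 0 → w0 f = 0 := fun f h => by rw [hw0def]; simp [h]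
  have hw0_ne : ∀ f : A, v f ≠ 0 → w0 f = E ^ (Holder.LL v eU f) := fun f h => by
    rw [hw0def]; simp [h]
  have hw0_pos : ∀ f : A, v f ≠ 0 → w0 f ≠ 0 := fun f h => by
    rw [hw0_ne f h]
    exact (NNReal.rpow_pos hE0).ne'
  have hrpow_le : ∀ x y : ℝ, E ^ x ≤ E ^ y ↔ x ≤ y := fun x y => by
    rw [← NNReal.coe_le_coe, NNReal.coe_rpow, NNReal.coe_rpow]
    exact Real.rpow_le_rpow_left_iff hER
  -- kernel characterisation
  have hkey : ∀ f g : A, v f = v g ↔ w0 f = w0 g := by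
    intro f g
    constructor
    · intro h
      rcases eq_or_ne (v f) 0 with h0 | h0
      · rw [hw0_zero f h0, hw0_zero g (by rw [← h]; exact h0)]
      · rw [hw0_ne f h0, hw0_ne g (by rw [← h]; exact h0), Holder.L_congr v eU h]
    · intro h
      rcases eq_or_ne (v f) 0 with h0 | h0
      · rcases eq_or_ne (v g) 0 with h1 | h1
        · rw [h0, h1]
        · exact absurd (h.symm.trans (hw0_zero f h0)) (hw0_pos g h1)
      · rcases eq_or_ne (v g) 0 with h1 | h1
        · exact absurd (h.trans (hw0_zero g h1)) (hw0_pos f h0)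
        · rw [hw0_ne f h0, hw0_ne g h1] at h
          have hL : Holder.LL v eU f = Holder.LL v eU g :=
            le_antisymm ((hrpow_le _ _).mp h.le) ((hrpow_le _ _).mp h.ge)
          rcases lt_trichotomy (v f) (v g) with hc | hc | hc
          · exact absurd hL (ne_of_lt (Holder.L_strict v eU he h₀ hh₀ harch h0 h1 hc))
          · exact hc
          · exact absurd hL.symm (ne_of_lt (Holder.L_strict v eU he h₀ hh₀ harch h1 h0 hc))
  have hw0_mono : ∀ f g : A, v f ≤ v g → w0 f ≤ w0 g := by
    intro f g h
    rcases eq_or_ne (v f) 0 with h0 | h0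
    · rw [hw0_zero f h0]; exact zero_le
    · have h1 : v g ≠ 0 := fun hg0 => h0 (ITOS.le_zero_iff'.mp (hg0 ▸ h))
      rw [hw0_ne f h0, hw0_ne g h1]
      rw [← NNReal.coe_le_coe, NNReal.coe_rpow, NNReal.coe_rpow,
        Real.rpow_le_rpow_left_iff hER]
      exact Holder.L_mono' v eU he h₀ hh₀ harch h0 h1 h
  have hw0_add : ∀ f g : A, w0 (f + g) = max (w0 f) (w0 g) := by
    intro f g
    have hvfg : v (f + g) = max (v f) (v g) := by
      rw [map_add, IdemTOSemifield.add_eq_max]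
    rcases le_total (v f) (v g) with h | h
    · have h2 : v (f + g) = v g := by rw [hvfg, max_eq_right h]
      rw [(hkey (f+g) g).mp h2, max_eq_right (hw0_mono f g h)]
    · have h2 : v (f + g) = v f := by rw [hvfg, max_eq_left h]
      rw [(hkey (f+g) f).mp h2, max_eq_left (hw0_mono g f h)]
  have hw0_mul : ∀ f g : A, w0 (f * g) = w0 f * w0 g := by
    intro f g
    rcases eq_or_ne (v f) 0 with h0 | h0
    · rw [hw0_zero f h0, hw0_zero (f*g) (by rw [map_mul, h0, zero_mul]), zero_mul]
    · rcases eq_or_ne (v g) 0 with h1 | h1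
      · rw [hw0_zero g h1, hw0_zero (f*g) (by rw [map_mul, h1, mul_zero]), mul_zero]
      · have hfg : v (f * g) ≠ 0 := by rw [map_mul]; exact ITOS.mul_ne_zero' h0 h1
        rw [hw0_ne f h0, hw0_ne g h1, hw0_ne (f*g) hfg,
          Holder.L_mul v eU he h₀ hh₀ harch h0 h1, NNReal.rpow_add (ne_of_gt hE0)]
  have hw0_one : w0 1 = 1 := by
    rw [hw0_ne 1 (by rw [map_one]; exact Holder.one_ne_zero''),
      Holder.L_one' v eU he h₀ hh₀ harch, NNReal.rpow_zero]
  have htropadd : ∀ x y : Trop, x + y = max x y := IdemTOSemifield.add_eq_max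
  set w : A →+* Trop :=
    { toFun := w0
      map_one' := hw0_one
      map_mul' := hw0_mul
      map_zero' := hw0_zero 0 (map_zero v)
      map_add' := fun f g => by exact (hw0_add f g).trans (htropadd (w0 f) (w0 g)).symm } with hwdef
  have hwapp : ∀ f : A, w f = w0 f := fun f => rfl
  -- coercion transfer in NNReal
  have hcoe2 : ∀ (x y : NNReal) (mp mm n : ℕ),
      (x ^ mp ≤ y ^ n * x ^ mm ↔ ((x:ℝ)) ^ mp ≤ ((y:ℝ)) ^ n * ((x:ℝ)) ^ mm) := by
    intro x y mp mm n
    exact ⟨fun h => by exact_mod_cast h, fun h => by exact_mod_cast h⟩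
  refine ⟨w, ⟨?_, ?_⟩, ?_⟩
  · intro f g
    rw [hker f g]
    exact hkey f g
  · -- normalisation
    intro b
    by_cases hb : b = 0
    · rw [hb, map_zero, map_zero, map_zero]
    · have hvb : v (ι b) ≠ 0 := fun h =>
        hb (hvι_inj (show vι b = vι 0 by rw [map_zero]; exact h))
      have ht : Trop.toNNReal (Eemb b) ≠ 0 := fun h =>
        hb (hembinj (show Eemb b = Eemb 0 by rw [map_zero]; exact h))
      have hcompat : ∀ (mp mm n : ℕ), 0 < n →
          (((eU : wit.K)) ^ mp ≤ (v (ι b)) ^ n * ((eU : wit.K)) ^ mm ↔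
            ((E : ℝ)) ^ mp ≤ ((Trop.toNNReal (Eemb b) : ℝ)) ^ n * ((E : ℝ)) ^ mm) := by
        intro mp mm n hn
        have hK : ((eU : wit.K)) ^ mp ≤ (v (ι b)) ^ n * ((eU : wit.K)) ^ mm ↔
            vι (s₀ ^ mp) ≤ vι (b ^ n * s₀ ^ mm) := by
          rw [heUv, map_mul, map_pow, map_pow, map_pow]
          exact Iff.rfl
        have hS : vι (s₀ ^ mp) ≤ vι (b ^ n * s₀ ^ mm) ↔
            Eemb (s₀ ^ mp) ≤ Eemb (b ^ n * s₀ ^ mm) := by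
          rw [ITOS.hom_le_iff vι hvι_inj, ITOS.hom_le_iff Eemb hembinj]
        have hT : Eemb (s₀ ^ mp) ≤ Eemb (b ^ n * s₀ ^ mm) ↔
            ((E : ℝ)) ^ mp ≤ ((Trop.toNNReal (Eemb b) : ℝ)) ^ n * ((E : ℝ)) ^ mm := by
          rw [map_mul, map_pow, map_pow, map_pow]
          exact hcoe2 (Eemb s₀) (Eemb b) mp mm n
        exact hK.trans (hS.trans hT)
      have hchar := Holder.char_of_compat v eU he h₀ hh₀ harch hvb hE1 ht hcompat
      rw [hwapp, hw0_ne _ hvb]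
      exact hchar
  · -- uniqueness
    intro w' hw'
    obtain ⟨hker', hnorm'⟩ := hw'
    have hkey' : ∀ f g : A, v f = v g ↔ w' f = w' g := fun f g =>
      (hker f g).symm.trans (hker' f g)
    have horder' : ∀ f g : A, v f ≤ v g ↔ w' f ≤ w' g := by
      intro f g
      calc v f ≤ v g ↔ v f + v g = v g := ITOS.le_iff_add
        _ ↔ v (f + g) = v g := by rw [map_add]
        _ ↔ w' (f + g) = w' g := hkey' _ _
        _ ↔ w' f + w' g = w' g := by rw [map_add]
        _ ↔ w' f ≤ w' g := ITOS.le_iff_add.symm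
    apply RingHom.ext
    intro f
    rcases eq_or_ne (v f) 0 with h0 | h0
    · have hP0 : P f 0 := (hker f 0).mpr (by rw [map_zero]; exact h0)
      have h1 : w' f = 0 := by rw [(hker' f 0).mp hP0, map_zero]
      rw [h1, hwapp, hw0_zero f h0]
      rfl
    · have ht' : Trop.toNNReal (w' f) ≠ 0 := fun h => by
        apply h0
        have hP0 : P f 0 := (hker' f 0).mpr (by rw [map_zero]; exact h)
        have := (hker f 0).mp hP0
        rwa [map_zero] at this
      have hcompat : ∀ (mp mm n : ℕ), 0 < n →
          (((eU : wit.K)) ^ mp ≤ (v f) ^ n * ((eU : wit.K)) ^ mm ↔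
            ((E : ℝ)) ^ mp ≤ ((Trop.toNNReal (w' f) : ℝ)) ^ n * ((E : ℝ)) ^ mm) := by
        intro mp mm n hn
        have hK : ((eU : wit.K)) ^ mp ≤ (v f) ^ n * ((eU : wit.K)) ^ mm ↔
            v (h₀ ^ mp) ≤ v (f ^ n * h₀ ^ mm) := by
          rw [map_mul, map_pow, map_pow, map_pow, hh₀]
        have hW : w' (h₀ ^ mp) ≤ w' (f ^ n * h₀ ^ mm) ↔
            ((E : ℝ)) ^ mp ≤ ((Trop.toNNReal (w' f) : ℝ)) ^ n * ((E : ℝ)) ^ mm := by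
          rw [map_mul, map_pow, map_pow, map_pow]
          have hws : w' h₀ = Eemb s₀ := hnorm' s₀
          rw [hws]
          exact hcoe2 (Eemb s₀) (w' f) mp mm n
        exact hK.trans ((horder' _ _).trans hW)
      have hchar := Holder.char_of_compat v eU he h₀ hh₀ harch h0 hE1 ht' hcompat
      rw [hwapp, hw0_ne f h0]
      exact hchar.symm
end

section
/- Let S be a sub-semifield of 𝕋 (with S ≠ 𝔹) and let A be a topological S-algebra. If P, P' ∈ Cont A and P ⊆ P', then P and P' have the same ideal-kernel, i.e., {a ∈ A : (a,0) ∈ P} = {a ∈ A : (a,0) ∈ P'}. -/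
universe u

/-!
Statement 12: if `P ⊆ P'` are both in `Cont A` for a topological `S`-algebra `A`, then `P` and
`P'` have the same ideal-kernel.
-/


namespace ContAux

open IdemTOSemifield

variable {K : Type*} [IdemTOSemifield K]

theorem one_ne_zero' : (1 : K) ≠ 0 := by
  obtain ⟨x, hx0, _⟩ := exists_nontrivial_unit (K := K)
  intro h
  exact hx0 (by rw [← mul_one x, h, mul_zero])

theorem zero_le' (a : K) : (0 : K) ≤ a := by
  have h : (0 : K) + a = a := zero_add a
  rw [add_eq_max] at h
  exact max_eq_right_iff.mp h

theorem le_add_iff {a b : K} : a ≤ b ↔ a + b = b := by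
  rw [add_eq_max, max_eq_right_iff]

theorem mul_mono {a b : K} (c : K) (h : a ≤ b) : c * a ≤ c * b := by
  have h1 : a + b = b := le_add_iff.mp h
  have h2 : c * a + c * b = c * b := by rw [← mul_add, h1]
  exact le_add_iff.mpr h2

variable {L : Type*} [IdemTOSemifield L]

theorem hom_mono (φ : K →+* L) {a b : K} (h : a ≤ b) : φ a ≤ φ b := by
  have h1 : a + b = b := le_add_iff.mp h
  have h2 : φ a + φ b = φ b := by rw [← map_add, h1]
  exact le_add_iff.mpr h2

theorem hom_ne_zero (φ : K →+* L) {t u : K} (h : t * u = 1) : φ t ≠ 0 := by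
  intro h0
  have : φ t * φ u = 1 := by rw [← map_mul, h, map_one]
  rw [h0, zero_mul] at this
  exact one_ne_zero' this.symm

/-- There is an element `t` with `t ≠ 0` and `t < 1`. -/
theorem exists_lt_one : ∃ t : K, t ≠ 0 ∧ t < 1 := by
  obtain ⟨x, hx0, hx1⟩ := exists_nontrivial_unit (K := K)
  rcases hx1.lt_or_gt with h | h
  · exact ⟨x, hx0, h⟩
  · obtain ⟨y, hxy⟩ := exists_inv x hx0
    have hy0 : y ≠ 0 := by
      intro h0
      rw [h0, mul_zero] at hxy
      exact one_ne_zero' hxy.symm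
    refine ⟨y, hy0, ?_⟩
    by_contra hy1
    push_neg at hy1
    have : x * 1 ≤ x * y := mul_mono x hy1
    rw [mul_one, hxy] at this
    exact absurd h (not_lt.mpr this)

/-- Any open set (in the canonical topology) containing `0` contains an interval `Iic b`
with `b ≠ 0`. -/
theorem exists_Iic_subset {U : Set K}
    (hU : TopologicalSpace.GenerateOpen
      {s : Set K | (∃ a : K, a ≠ 0 ∧ s = {a}) ∨ (∃ a : K, a ≠ 0 ∧ s = Set.Iic a)} U)
    (h0 : (0 : K) ∈ U) : ∃ b : K, b ≠ 0 ∧ Set.Iic b ⊆ U := by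
  induction hU with
  | basic s hs =>
    rcases hs with ⟨a, ha, rfl⟩ | ⟨a, ha, rfl⟩
    · exact absurd h0.symm ha
    · exact ⟨a, ha, subset_rfl⟩
  | univ => exact ⟨1, one_ne_zero', fun _ _ => trivial⟩
  | inter u v _ _ ihu ihv =>
    obtain ⟨b1, hb1, hsub1⟩ := ihu h0.1
    obtain ⟨b2, hb2, hsub2⟩ := ihv h0.2
    refine ⟨min b1 b2, ?_, fun x hx => ⟨hsub1 (le_trans hx (min_le_left _ _)),
      hsub2 (le_trans hx (min_le_right _ _))⟩⟩
    rcases le_total b1 b2 with h | h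
    · rw [min_eq_left h]; exact hb1
    · rw [min_eq_right h]; exact hb2
  | sUnion T hT ih =>
    obtain ⟨s, hs, h0s⟩ := h0
    obtain ⟨b, hb, hsub⟩ := ih s hs h0s
    exact ⟨b, hb, fun x hx => ⟨s, hs, hsub hx⟩⟩

/-- `S ⊆ 𝕋` is archimedean: powers of `t < 1` get below any nonzero element. -/
theorem trop_arch {S : Type*} [TropSub S] {t s : S} (ht0 : t ≠ 0) (ht1 : t < 1) (hs : s ≠ 0) :
    ∃ n : ℕ, t ^ n ≤ s := by
  let e := TropSub.emb (S := S)
  let en : S → NNReal := fun x => Trop.toNNReal (e x)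
  have hmono : ∀ {a b : S}, a ≤ b → en a ≤ en b := fun {a b} h => show e a ≤ e b from hom_mono e h
  have hinj : Function.Injective en := fun a b h => TropSub.emb_injective h
  have hstrict : ∀ {a b : S}, a < b → en a < en b := fun h =>
    lt_of_le_of_ne (hmono h.le) fun he => h.ne (hinj he)
  have h1 : en (1 : S) = 1 := by
    show Trop.toNNReal (e 1) = 1
    rw [map_one]
    rfl
  have h0 : en (0 : S) = 0 := by
    show Trop.toNNReal (e 0) = 0
    rw [map_zero]
    rfl
  have hpow : ∀ n : ℕ, en (t ^ n) = (en t) ^ n := by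
    intro n
    induction n with
    | zero => rw [pow_zero, pow_zero, h1]
    | succ n ih =>
      rw [pow_succ, pow_succ, ← ih]
      show Trop.toNNReal (e (t ^ n * t)) = Trop.toNNReal (e (t ^ n)) * Trop.toNNReal (e t)
      rw [map_mul]
      rfl
  have het1 : en t < 1 := by
    have := hstrict ht1
    rwa [h1] at this
  have hes : (0 : NNReal) < en s := by
    refine lt_of_le_of_ne (zero_le (a := en s)) fun h => ?_
    exact hs (hinj (h0.trans h)).symm
  obtain ⟨n, hn⟩ := exists_pow_lt_of_lt_one hes het1
  refine ⟨n, ?_⟩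
  by_contra hle
  push_neg at hle
  have := hstrict hle
  rw [hpow n] at this
  exact absurd hn (not_lt.mpr this.le)

end ContAux

theorem inCont_subset_same_ideal_kernel {S A : Type u} [TropSub S] [CommSemiring A]
    (tA : TopologicalSpace A) (hadd : @ContinuousAdd A tA _) (hmul : @ContinuousMul A tA _)
    (ι : S →+* A) (hι : @Continuous S A (canonicalTopology S) tA ι)
    (P P' : RingCon A) (hP : InCont tA P) (hP' : InCont tA P')
    (hsub : ∀ f g : A, P f g → P' f g) :
    ∀ a : A, P a 0 ↔ P' a 0 := by
  obtain ⟨w⟩ := hP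
  obtain ⟨w'⟩ := hP'
  letI := w.instK
  letI := w'.instK
  intro a
  constructor
  · -- easy direction
    intro h
    exact hsub _ _ h
  · intro h'
    have hva' : w'.v a = 0 := by
      have := (w'.ker a 0).mp h'
      rwa [map_zero] at this
    obtain ⟨t, ht0, ht1⟩ := ContAux.exists_lt_one (K := S)
    obtain ⟨u, htu⟩ := IdemTOSemifield.exists_inv t ht0
    -- show v a = 0
    suffices hva : w.v a = 0 by
      rw [w.ker a 0, hva, map_zero]
    by_contra hk
    set k := w.v a with hkdef
    -- key: for all n, ¬ (v (ι (t^n)) ≤ k)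
    have key : ∀ n : ℕ, ¬ (w.v (ι (t ^ n)) ≤ k) := by
      intro n hle
      have htun : t ^ n * u ^ n = 1 := by rw [← mul_pow, htu, one_pow]
      have hne' : w'.v (ι (t ^ n)) ≠ 0 :=
        ContAux.hom_ne_zero ((w'.v).comp ι) htun
      have hnP' : ¬ P' (a + ι (t ^ n)) a := by
        intro hc
        have := (w'.ker _ _).mp hc
        rw [map_add, hva', zero_add] at this
        exact hne' (by rw [this])
      have hnP : ¬ P (a + ι (t ^ n)) a := fun hc => hnP' (hsub _ _ hc)
      apply hnP
      rw [w.ker, map_add]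
      rw [IdemTOSemifield.add_eq_max, ← hkdef, max_eq_left hle]
    -- continuity contradiction
    have hIic : TopologicalSpace.GenerateOpen
        {s : Set w.K | (∃ a : w.K, a ≠ 0 ∧ s = {a}) ∨ (∃ a : w.K, a ≠ 0 ∧ s = Set.Iic a)}
        (Set.Iic k) := TopologicalSpace.GenerateOpen.basic _ (Or.inr ⟨k, hk, rfl⟩)
    have hIicOpen : @IsOpen w.K (canonicalTopology w.K) (Set.Iic k) := hIic
    have hcont : @Continuous S w.K (canonicalTopology S) (canonicalTopology w.K)
        (fun s => w.v (ι s)) := by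
      letI : TopologicalSpace S := canonicalTopology S
      letI : TopologicalSpace A := tA
      letI : TopologicalSpace w.K := canonicalTopology w.K
      exact w.cont.comp hι
    have hT : @IsOpen S (canonicalTopology S) ((fun s => w.v (ι s)) ⁻¹' Set.Iic k) := by
      letI : TopologicalSpace S := canonicalTopology S
      letI : TopologicalSpace w.K := canonicalTopology w.K
      exact hcont.isOpen_preimage _ hIicOpen
    have h0T : (0 : S) ∈ (fun s => w.v (ι s)) ⁻¹' Set.Iic k := by
      show w.v (ι 0) ≤ k
      rw [map_zero, map_zero]
      exact ContAux.zero_le' k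
    obtain ⟨b, hb0, hbsub⟩ := ContAux.exists_Iic_subset hT h0T
    obtain ⟨n, hn⟩ := ContAux.trop_arch ht0 ht1 hb0
    exact key n (hbsub hn)
end
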